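/- arXiv:2508.05220 — 7 statements merged into one kernel-verified Lean document; each statement's English description precedes it below -/
import Mathlib

section
/- Let $Y_2 \subseteq Y_1$ be Banach spaces with $Y_1$ infinite-dimensional and the embedding $Y_2 \hookrightarrow Y_1$ compact. Then there exist $\varepsilon > 0$ and a sequence $(y_n)$ bounded in $Y_1$ such that every sequence $(z_n)$ in $Y_2$ with $|y_n - z_n|_{Y_1} < \varepsilon$ for all $n$ is unbounded in $Y_2$. -/
/-- Let `Y₂ ⊆ Y₁` be Banach spaces (the inclusion being realized by an
injective continuous linear map `J`), with `Y₁` infinite-dimensional and the embedding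
`J : Y₂ ↪ Y₁` compact. Then there exist `ε > 0` and a sequence `(yₙ)` bounded in `Y₁` such
that every sequence `(zₙ)` in `Y₂` with `‖yₙ - zₙ‖_{Y₁} < ε` for all `n` is unbounded
in `Y₂`. -/
theorem exists_bounded_seq_far_from_bounded_subsets_of_compact_embedding
    {Y1 Y2 : Type*}
    [NormedAddCommGroup Y1] [NormedSpace ℝ Y1] [CompleteSpace Y1]
    [NormedAddCommGroup Y2] [NormedSpace ℝ Y2] [CompleteSpace Y2]
    (hY1 : ¬ FiniteDimensional ℝ Y1)
    (J : Y2 →L[ℝ] Y1) (hJinj : Function.Injective J) (hJcomp : IsCompactOperator J) :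
    ∃ ε > (0 : ℝ), ∃ y : ℕ → Y1, Bornology.IsBounded (Set.range y) ∧
      ∀ z : ℕ → Y2, (∀ n, ‖y n - J (z n)‖ < ε) → ¬ Bornology.IsBounded (Set.range z) := by
  obtain ⟨R, u, hR1, hu, hsep⟩ := exists_seq_norm_le_one_le_norm_sub (𝕜 := ℝ) hY1
  have key : ∀ n : ℕ, ∃ m : ℕ, ∀ z : Y2, ‖z‖ ≤ n → (1/5 : ℝ) ≤ ‖u m - J z‖ := by
    intro n
    by_contra h
    push_neg at h
    choose z hzn hz using h
    obtain ⟨K, hK, hKsub⟩ :=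
      hJcomp.image_closedBall_subset_compact (𝕜₁ := ℝ) (f := (J : Y2 →ₗ[ℝ] Y1)) n
    obtain ⟨t, htfin, htcov⟩ := (Metric.totallyBounded_iff.1 hK.totallyBounded)
      (1/5) (by norm_num)
    have hmem : ∀ m : ℕ, J (z m) ∈ K := by
      intro m
      exact hKsub ⟨z m, Metric.mem_closedBall.2 (by simpa using hzn m), rfl⟩
    have hcen : ∀ m : ℕ, ∃ c ∈ t, dist (J (z m)) c < 1/5 := by
      intro m
      have := htcov (hmem m)
      simp only [Set.mem_iUnion, Metric.mem_ball] at this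
      obtain ⟨c, hc, hdc⟩ := this
      exact ⟨c, hc, hdc⟩
    choose c hct hcd using hcen
    haveI := htfin.to_subtype
    obtain ⟨j, k, hjk, heq⟩ :=
      Finite.exists_ne_map_eq_of_infinite (fun m : ℕ => (⟨c m, hct m⟩ : t))
    have hceq : c j = c k := congrArg Subtype.val heq
    have h1 : ‖u j - u k‖ ≤ ‖u j - J (z j)‖ + dist (J (z j)) (c j)
        + dist (c k) (J (z k)) + ‖J (z k) - u k‖ := by
      rw [hceq]
      have := dist_triangle4 (u j) (J (z j)) (c k) (u k)
      have h2 := dist_triangle (c k) (J (z k)) (u k)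
      simp only [dist_eq_norm] at this h2 ⊢
      calc ‖u j - u k‖ ≤ ‖u j - J (z j)‖ + ‖J (z j) - c k‖ + ‖c k - u k‖ := this
        _ ≤ ‖u j - J (z j)‖ + ‖J (z j) - c k‖ + (‖c k - J (z k)‖ + ‖J (z k) - u k‖) := by
            linarith
        _ = _ := by ring
    have hj := hz j
    have hk2 := hz k
    have hdj := hcd j
    have hdk : dist (c k) (J (z k)) < 1/5 := by rw [dist_comm]; exact hcd k
    have hzk : ‖J (z k) - u k‖ < 1/5 := by rw [norm_sub_rev]; exact hk2
    have := hsep hjk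
    linarith
  choose m hm using key
  refine ⟨1/5, by norm_num, fun n => u (m n), ?_, ?_⟩
  · exact (Metric.isBounded_closedBall (x := (0:Y1)) (r := R)).subset
      (by rintro _ ⟨n, rfl⟩; exact Metric.mem_closedBall.2 (by simpa using hu (m n)))
  · intro z hz hb
    obtain ⟨C, hC⟩ := hb.exists_norm_le
    set n := ⌈C⌉₊
    have h1 : ‖z n‖ ≤ (n : ℝ) :=
      le_trans (hC _ (Set.mem_range_self n)) (Nat.le_ceil C)
    exact absurd (hz n) (not_lt.2 (hm n (z n) h1))
end

section
/- Let $Y_2 \subseteq Y_1$ be Banach spaces with $Y_1$ infinite-dimensional and the embedding $Y_2 \hookrightarrow Y_1$ compact, and let $\Omega \subseteq \mathbb{R}^d$ be a nonempty open set. Then $L^\infty(\Omega, Y_2)$ is not dense in $L^\infty(\Omega, Y_1)$, even if $Y_2$ is dense in $Y_1$. -/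
open MeasureTheory ENNReal


/-- Any function from `ℕ` (with the `⊤` σ-algebra) to a topological space is
strongly measurable. -/
lemma stronglyMeasurable_from_nat {β : Type*} [TopologicalSpace β] (y : ℕ → β) :
    MeasureTheory.StronglyMeasurable y := by
  refine ⟨fun k => ⟨fun n => y (min n k), fun v => MeasurableSet.of_discrete, ?_⟩, fun n => ?_⟩
  · apply (Set.finite_Iic k).image y |>.subset
    rintro _ ⟨n, rfl⟩
    exact ⟨min n k, Set.mem_Iic.mpr (min_le_right n k), rfl⟩
  · apply tendsto_const_nhds.congr'
    filter_upwards [Filter.eventually_ge_atTop n] with k hk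
    simp [MeasureTheory.SimpleFunc.coe_mk, min_eq_left hk]

/-- Let `Y₂ ⊆ Y₁` be Banach spaces (inclusion realized by an injective
continuous linear map `J`) with `Y₁` infinite-dimensional and the embedding compact, and let
`Ω ⊆ ℝᵈ` be a nonempty open set.  Then `L^∞(Ω, Y₂)` is not dense in `L^∞(Ω, Y₁)`, even if
`Y₂` is dense in `Y₁` (density of the range of `J` is allowed — it appears here as an extra
hypothesis which does not rescue density). -/
theorem Linfty_not_dense_of_compact_embedding
    {d : ℕ} (hd : 0 < d) {Y1 Y2 : Type*}
    [NormedAddCommGroup Y1] [NormedSpace ℝ Y1] [CompleteSpace Y1]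
    [NormedAddCommGroup Y2] [NormedSpace ℝ Y2]
    (hY1 : ¬ FiniteDimensional ℝ Y1)
    (J : Y2 →L[ℝ] Y1) (hJinj : Function.Injective J) (hJcomp : IsCompactOperator J)
    (hJdense : DenseRange J)
    (Ω : Set (EuclideanSpace ℝ (Fin d))) (hΩo : IsOpen Ω) (hΩne : Ω.Nonempty) :
    ¬ Dense {f : Lp Y1 ⊤ (volume.restrict Ω) |
        ∃ g : EuclideanSpace ℝ (Fin d) → Y2,
          MemLp g ⊤ (volume.restrict Ω) ∧
          ∀ᵐ x ∂(volume.restrict Ω),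
            (f : EuclideanSpace ℝ (Fin d) → Y1) x = J (g x)} := by
  classical
  intro hdense
  set μ := volume.restrict Ω with hμ
  -- a `1`-separated bounded sequence in `Y1`
  obtain ⟨R, y, hR1, hyR, hysep⟩ := exists_seq_norm_le_one_le_norm_sub (𝕜 := ℝ) hY1
  -- a ball inside Ω
  obtain ⟨c, hc⟩ := hΩne
  obtain ⟨r, hr, hball⟩ := Metric.isOpen_iff.mp hΩo c hc
  -- the index function
  set P : EuclideanSpace ℝ (Fin d) → ℕ → Prop :=
    fun x n => r / 2 ^ (n + 1) ≤ dist x c ∨ dist x c = 0 with hPdef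
  have hpowlt : ∀ n : ℕ, r / 2 ^ (n + 1) < r / 2 ^ n := by
    intro n
    have hp : (0:ℝ) < 2 ^ n := by positivity
    rw [pow_succ, div_lt_div_iff₀ (by positivity) hp]
    nlinarith
  have hP : ∀ x, ∃ n, P x n := by
    intro x
    rcases eq_or_lt_of_le (dist_nonneg (x := x) (y := c)) with h0 | h0
    · exact ⟨0, Or.inr h0.symm⟩
    · obtain ⟨n, hn⟩ := exists_pow_lt_of_lt_one (div_pos h0 hr) (by norm_num : (1:ℝ)/2 < 1)
      refine ⟨n, Or.inl ?_⟩
      have h1 : r * (1/2 : ℝ) ^ n < dist x c := by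
        rw [← lt_div_iff₀' hr]; exact hn
      have h2 : r / 2 ^ (n + 1) ≤ r * (1/2 : ℝ) ^ n := by
        rw [div_pow, one_pow, mul_one_div]
        exact (hpowlt n).le
      linarith
  set N : EuclideanSpace ℝ (Fin d) → ℕ := fun x => Nat.find (hP x) with hNdef
  have hNmeas : Measurable N := by
    apply measurable_find
    intro k
    have hdm : Measurable fun x : EuclideanSpace ℝ (Fin d) => dist x c :=
      (continuous_id.dist continuous_const).measurable
    exact hdm (measurableSet_Ici.union (measurableSet_singleton 0))
  set f₀ : EuclideanSpace ℝ (Fin d) → Y1 := fun x => y (N x) with hf₀def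
  have hf₀sm : StronglyMeasurable f₀ :=
    (stronglyMeasurable_from_nat y).comp_measurable hNmeas
  have hf₀ : MemLp f₀ ⊤ μ :=
    memLp_top_of_bound hf₀sm.aestronglyMeasurable R (Filter.Eventually.of_forall fun x => hyR _)
  set f : Lp Y1 ⊤ μ := hf₀.toLp f₀ with hfdef
  -- the annuli
  set U : ℕ → Set (EuclideanSpace ℝ (Fin d)) :=
    fun n => {x | r / 2 ^ (n + 1) < dist x c ∧ dist x c < r / 2 ^ n} with hUdef
  have hUopen : ∀ n, IsOpen (U n) := by
    intro n
    exact (isOpen_lt continuous_const (continuous_id.dist continuous_const)).inter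
      (isOpen_lt (continuous_id.dist continuous_const) continuous_const)
  have hUne : ∀ n, (U n).Nonempty := by
    intro n
    set t : ℝ := (r / 2 ^ (n + 1) + r / 2 ^ n) / 2 with htdef
    have ht1 : r / 2 ^ (n + 1) < t := by have := hpowlt n; simp only [htdef]; linarith
    have ht2 : t < r / 2 ^ n := by have := hpowlt n; simp only [htdef]; linarith
    have ht0 : 0 < t := lt_trans (by positivity) ht1
    have hdist : dist (c + EuclideanSpace.single (⟨0, hd⟩ : Fin d) t) c = t := by
      rw [dist_eq_norm, add_sub_cancel_left, EuclideanSpace.norm_single,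
        Real.norm_eq_abs, abs_of_pos ht0]
    exact ⟨c + EuclideanSpace.single (⟨0, hd⟩ : Fin d) t, by
      simp only [hUdef, Set.mem_setOf_eq, hdist]; exact ⟨ht1, ht2⟩⟩
  have hUΩ : ∀ n, U n ⊆ Ω := by
    intro n x hx
    apply hball
    have h1 : r / 2 ^ n ≤ r := by
      apply div_le_self hr.le
      exact one_le_pow₀ (by norm_num)
    exact lt_of_lt_of_le hx.2 h1
  have hUval : ∀ n, ∀ x ∈ U n, f₀ x = y n := by
    intro n x hx
    have hdx : 0 < dist x c := lt_trans (by positivity) hx.1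
    have : N x = n := by
      rw [hNdef, Nat.find_eq_iff]
      refine ⟨Or.inl hx.1.le, ?_⟩
      intro m hm
      rintro (h | h)
      · have hle : r / 2 ^ n ≤ r / 2 ^ (m + 1) := by
          have h2 : (2:ℝ) ^ (m + 1) ≤ 2 ^ n := by
            apply pow_le_pow_right₀ (by norm_num) hm
          exact div_le_div_of_nonneg_left hr.le (by positivity) h2
        have := hx.2
        linarith
      · exact hdx.ne' h
    simp only [hf₀def, this]
  have hμU : ∀ n, μ (U n) ≠ 0 := by
    intro n
    rw [hμ, Measure.restrict_apply (hUopen n).measurableSet,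
      Set.inter_eq_self_of_subset_left (hUΩ n)]
    exact ((hUopen n).measure_pos volume (hUne n)).ne'
  -- get an approximant
  obtain ⟨f', hf'S, hdist⟩ := Metric.mem_closure_iff.mp (hdense f) (1/8) (by norm_num)
  obtain ⟨g, hg, hfg⟩ := hf'S
  -- essential bound for g
  set C : ℝ := (eLpNormEssSup g μ).toReal with hCdef
  have hgtop : eLpNormEssSup g μ ≠ ⊤ := by
    have := hg.2
    rwa [eLpNorm_exponent_top, lt_top_iff_ne_top] at this
  have hgC : ∀ᵐ x ∂μ, ‖g x‖ ≤ C := by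
    filter_upwards [ae_le_eLpNormEssSup (f := g) (μ := μ)] with x hx
    calc ‖g x‖ = ((‖g x‖₊ : ℝ≥0∞)).toReal := by simp
      _ ≤ C := ENNReal.toReal_mono hgtop hx
  -- a.e. closeness
  have hEfin : eLpNorm (⇑f - ⇑f') ⊤ μ ≠ ⊤ := by
    rw [← eLpNorm_congr_ae (Lp.coeFn_sub f f')]
    exact (Lp.eLpNorm_lt_top (f - f')).ne
  have hEsmall : (eLpNorm (⇑f - ⇑f') ⊤ μ).toReal < 1/8 := by
    rw [← Lp.dist_def]; exact hdist
  have hclose : ∀ᵐ x ∂μ, ‖f x - f' x‖ ≤ 1/8 := by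
    have h := ae_le_eLpNormEssSup (f := ⇑f - ⇑f') (μ := μ)
    filter_upwards [h] with x hx
    have : ((‖f x - f' x‖₊ : ℝ≥0∞)).toReal ≤ (eLpNormEssSup (⇑f - ⇑f') μ).toReal := by
      apply ENNReal.toReal_mono
      · rwa [← eLpNorm_exponent_top]
      · exact hx
    simp only [ENNReal.coe_toReal, _root_.coe_nnnorm] at this
    rw [eLpNorm_exponent_top] at hEsmall
    calc ‖f x - f' x‖ ≤ (eLpNormEssSup (⇑f - ⇑f') μ).toReal := this
      _ ≤ 1/8 := hEsmall.le
  have hmain : ∀ᵐ x ∂μ, ‖f₀ x - J (g x)‖ ≤ 1/8 ∧ ‖g x‖ ≤ C := by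
    filter_upwards [hclose, hgC, hfg, hf₀.coeFn_toLp] with x h1 h2 h3 h4
    refine ⟨?_, h2⟩
    rw [← h3, ← h4]
    exact h1
  -- pick points in the annuli
  set T : Set (EuclideanSpace ℝ (Fin d)) :=
    {x | ‖f₀ x - J (g x)‖ ≤ 1/8 ∧ ‖g x‖ ≤ C} with hTdef
  have hTc : μ Tᶜ = 0 := by
    rw [ae_iff] at hmain
    have heq : Tᶜ = {x | ¬ (‖f₀ x - J (g x)‖ ≤ 1/8 ∧ ‖g x‖ ≤ C)} := by
      ext x; simp [hTdef]
    rw [heq]; exact hmain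
  have hpick : ∀ n : ℕ, ∃ x, ‖y n - J (g x)‖ ≤ 1/8 ∧ ‖g x‖ ≤ C := by
    intro n
    have hne : (U n ∩ T).Nonempty := by
      by_contra h
      rw [Set.not_nonempty_iff_eq_empty] at h
      have : U n ⊆ Tᶜ := by
        intro x hx
        intro hxT
        exact Set.eq_empty_iff_forall_notMem.mp h x ⟨hx, hxT⟩
      exact hμU n (measure_mono_null this hTc)
    obtain ⟨x, hxU, hxT⟩ := hne
    exact ⟨x, by rw [← hUval n x hxU]; exact hxT.1, hxT.2⟩
  choose xs hxs1 hxs2 using hpick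
  set z : ℕ → Y1 := fun n => J (g (xs n)) with hzdef
  -- compactness
  have hK : IsCompact (closure ((J : Y2 →ₗ[ℝ] Y1) '' Metric.closedBall 0 C)) :=
    IsCompactOperator.isCompact_closure_image_closedBall (𝕜₁ := ℝ)
      (f := (J : Y2 →ₗ[ℝ] Y1)) hJcomp C
  have hzK : ∀ n, z n ∈ closure ((J : Y2 →ₗ[ℝ] Y1) '' Metric.closedBall 0 C) := by
    intro n
    apply subset_closure
    exact ⟨g (xs n), by simpa [Metric.mem_closedBall, dist_zero_right] using hxs2 n, rfl⟩
  obtain ⟨a, -, φ, hφ, hconv⟩ := hK.tendsto_subseq hzK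
  obtain ⟨M, hM⟩ := Metric.tendsto_atTop.mp hconv (1/4) (by norm_num)
  have h1 := hM M le_rfl
  have h2 := hM (M + 1) (Nat.le_succ M)
  have hne : φ M ≠ φ (M + 1) := (hφ (Nat.lt_succ_self M)).ne
  have hsep : 1 ≤ ‖y (φ M) - y (φ (M + 1))‖ := hysep hne
  have htri : dist (y (φ M)) (y (φ (M + 1))) ≤
      dist (y (φ M)) (z (φ M)) + dist (z (φ M)) (z (φ (M + 1)))
        + dist (z (φ (M + 1))) (y (φ (M + 1))) := dist_triangle4 _ _ _ _
  have htri2 : dist (z (φ M)) (z (φ (M + 1))) ≤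
      dist (z (φ M)) a + dist a (z (φ (M + 1))) := dist_triangle _ _ _
  have hb1 : dist (y (φ M)) (z (φ M)) ≤ 1/8 := by
    rw [dist_eq_norm]; exact hxs1 _
  have hb2 : dist (z (φ (M + 1))) (y (φ (M + 1))) ≤ 1/8 := by
    rw [dist_comm, dist_eq_norm]; exact hxs1 _
  have hd1 : dist (z (φ M)) a < 1/4 := by
    simpa using h1
  have hd2 : dist a (z (φ (M + 1))) < 1/4 := by
    rw [dist_comm]; simpa using h2
  rw [← dist_eq_norm] at hsep
  linarith
end

section
/- Every separable Banach space that is the dual of some Banach space satisfies the Radon–Nikodym property; in particular, every reflexive Banach space satisfies the Radon–Nikodym property. -/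
open MeasureTheory

/-- A Banach space `Y` has the Radon–Nikodym property if every Lipschitz map `ℝ → Y` is
differentiable almost everywhere. -/
def RadonNikodymProperty (Y : Type*) [NormedAddCommGroup Y] [NormedSpace ℝ Y] : Prop :=
  ∀ f : ℝ → Y, (∃ K : NNReal, LipschitzWith K f) → ∀ᵐ x, DifferentiableAt ℝ f x

universe u v w

section RNPauxSection

namespace RNPaux

open MeasureTheory Filter Topology Set NormedSpace TopologicalSpace

set_option maxHeartbeats 1000000

/-- The derivative of a Lipschitz function `ℝ → ℝ` is bounded by the Lipschitz constant. -/
theorem abs_deriv_le {K : NNReal} {g : ℝ → ℝ} (h : LipschitzWith K g) (x : ℝ) :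
    |deriv g x| ≤ K := by
  have h1 : ‖fderiv ℝ g x‖ ≤ K := norm_fderiv_le_of_lipschitz ℝ h
  calc |deriv g x| = ‖(fderiv ℝ g x) 1‖ := by rw [fderiv_apply_one_eq_deriv]; rfl
    _ ≤ ‖fderiv ℝ g x‖ * ‖(1 : ℝ)‖ := (fderiv ℝ g x).le_opNorm 1
    _ ≤ K * 1 := by rw [norm_one]; gcongr
    _ = K := mul_one _

/-- Fundamental theorem of calculus for Lipschitz functions `ℝ → ℝ`. -/
theorem lipschitz_integral_deriv {K : NNReal} {g : ℝ → ℝ} (hg : LipschitzWith K g)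
    {a b : ℝ} (hab : a ≤ b) : ∫ t in a..b, deriv g t = g b - g a := by
  have hgc : Continuous g := hg.continuous
  set c : ℝ := (K : ℝ) with hc
  have hc0 : (0:ℝ) ≤ c := K.coe_nonneg
  have hdist : ∀ s t : ℝ, |g s - g t| ≤ c * |s - t| := by
    intro s t
    have := hg.dist_le_mul s t
    rwa [Real.dist_eq, Real.dist_eq] at this
  have hmono1 : Monotone fun x => g x + c * x := by
    intro s t hst
    have h1 := (abs_le.1 (hdist s t)).2
    rw [abs_of_nonpos (by linarith : s - t ≤ 0)] at h1
    dsimp only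
    nlinarith
  have hmono2 : Monotone fun x => c * x - g x := by
    intro s t hst
    have h1 := (abs_le.1 (hdist s t)).1
    rw [abs_of_nonpos (by linarith : s - t ≤ 0)] at h1
    dsimp only
    nlinarith
  set S1 : StieltjesFunction ℝ := ⟨fun x => g x + c * x, hmono1, fun x =>
    ((hgc.add (continuous_const.mul continuous_id)).continuousWithinAt)⟩ with hS1
  set S2 : StieltjesFunction ℝ := ⟨fun x => c * x - g x, hmono2, fun x =>
    (((continuous_const.mul continuous_id).sub hgc).continuousWithinAt)⟩ with hS2
  have hS1app : ∀ x, S1 x = g x + c * x := fun _ => rfl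
  have hS2app : ∀ x, S2 x = c * x - g x := fun _ => rfl
  haveI hloc : IsLocallyFiniteMeasure (S1.measure + S2.measure) := by
    constructor
    intro x
    refine ⟨Ioo (x - 1) (x + 1), Ioo_mem_nhds (by linarith) (by linarith), ?_⟩
    rw [Measure.add_apply]
    have h1 : S1.measure (Ioo (x - 1) (x + 1)) < ⊤ :=
      lt_of_le_of_lt (measure_mono Ioo_subset_Ioc_self)
        (by rw [S1.measure_Ioc]; exact ENNReal.ofReal_lt_top)
    have h2 : S2.measure (Ioo (x - 1) (x + 1)) < ⊤ :=
      lt_of_le_of_lt (measure_mono Ioo_subset_Ioc_self)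
        (by rw [S2.measure_Ioc]; exact ENNReal.ofReal_lt_top)
    exact ENNReal.add_lt_top.2 ⟨h1, h2⟩
  -- S1.measure + S2.measure = (2c) • volume
  have hsum : S1.measure + S2.measure = (ENNReal.ofReal (2 * c)) • (volume : Measure ℝ) := by
    refine Measure.ext_of_Ioc _ _ (fun p q hpq => ?_)
    have hm1 : g p + c * p ≤ g q + c * q := hmono1 hpq.le
    have hm2 : c * p - g p ≤ c * q - g q := hmono2 hpq.le
    rw [Measure.add_apply, S1.measure_Ioc, S2.measure_Ioc, Measure.smul_apply,
      Real.volume_Ioc, smul_eq_mul, hS1app, hS1app, hS2app, hS2app,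
      ← ENNReal.ofReal_add (by linarith) (by linarith),
      ← ENNReal.ofReal_mul (by linarith)]
    ring_nf
  have hle : S1.measure ≤ (ENNReal.ofReal (2 * c)) • (volume : Measure ℝ) := by
    rw [← hsum]; exact Measure.le_add_right le_rfl
  have hac : S1.measure ≪ (volume : Measure ℝ) := by
    intro s hs
    have h1 := hle s
    rw [Measure.smul_apply, smul_eq_mul, hs, mul_zero] at h1
    exact le_antisymm h1 zero_le
  have hwd : (volume : Measure ℝ).withDensity (S1.measure.rnDeriv volume) = S1.measure :=
    Measure.withDensity_rnDeriv_eq _ _ hac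
  have hrn_meas : Measurable (S1.measure.rnDeriv volume) := Measure.measurable_rnDeriv _ _
  have hlt : ∀ᵐ x, S1.measure.rnDeriv volume x < ⊤ := Measure.rnDeriv_lt_top _ _
  have hlint : ∫⁻ x in Ioc a b, S1.measure.rnDeriv volume x = S1.measure (Ioc a b) := by
    conv_rhs => rw [← hwd]
    rw [withDensity_apply _ measurableSet_Ioc]
  have hne : (∫⁻ x in Ioc a b, S1.measure.rnDeriv volume x) ≠ ⊤ := by
    rw [hlint, S1.measure_Ioc]; exact ENNReal.ofReal_ne_top
  have hint1 : IntegrableOn (fun x => (S1.measure.rnDeriv volume x).toReal) (Ioc a b) :=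
    integrable_toReal_of_lintegral_ne_top hrn_meas.aemeasurable.restrict hne
  have hkey : ∫ x in Ioc a b, (S1.measure.rnDeriv volume x).toReal = S1 b - S1 a := by
    rw [integral_toReal hrn_meas.aemeasurable.restrict (ae_restrict_of_ae hlt), hlint,
      S1.measure_Ioc, ENNReal.toReal_ofReal (by simpa using sub_nonneg.2 (hmono1 hab))]
  have hderiv : ∀ᵐ x, deriv g x = (S1.measure.rnDeriv volume x).toReal - c := by
    filter_upwards [S1.ae_hasDerivAt] with x hx
    have hx' : HasDerivAt (fun y => g y + c * y) ((S1.measure.rnDeriv volume x).toReal) x := hx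
    have h2 : HasDerivAt (fun y => c * y) c x := by
      simpa using (hasDerivAt_id x).const_mul c
    have h3 : HasDerivAt g ((S1.measure.rnDeriv volume x).toReal - c) x := by
      have := hx'.sub h2
      rwa [show ((fun y => g y + c * y) - fun y => c * y) = g from by funext y; simp] at this
    exact h3.deriv
  have hII : IntervalIntegrable (fun x => (S1.measure.rnDeriv volume x).toReal) volume a b := by
    rw [intervalIntegrable_iff, uIoc_of_le hab]; exact hint1
  calc ∫ t in a..b, deriv g t
      = ∫ t in a..b, ((S1.measure.rnDeriv volume t).toReal - c) :=
        intervalIntegral.integral_congr_ae (hderiv.mono fun t ht _ => ht)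
    _ = (∫ t in a..b, (S1.measure.rnDeriv volume t).toReal) - ∫ t in a..b, c :=
        intervalIntegral.integral_sub hII intervalIntegrable_const
    _ = (S1 b - S1 a) - (b - a) * c := by
        rw [intervalIntegral.integral_of_le hab, hkey, intervalIntegral.integral_const,
          smul_eq_mul]
    _ = g b - g a := by rw [hS1app, hS1app]; ring


/-- A countable norming set for the dual of a space with separable dual. -/
theorem norming_seq (X : Type*) [NormedAddCommGroup X] [NormedSpace ℝ X]
    [SeparableSpace (StrongDual ℝ X)] :
    ∃ t : ℕ → X, (∀ n, ‖t n‖ ≤ 1) ∧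
      ∀ (ψ : StrongDual ℝ X) (c : ℝ), 0 ≤ c → (∀ n, |ψ (t n)| ≤ c) → ‖ψ‖ ≤ c := by
  obtain ⟨u, hu⟩ := exists_dense_seq (StrongDual ℝ X)
  have hx : ∀ k m : ℕ, ∃ x : X, ‖x‖ ≤ 1 ∧ ‖u k‖ - 1/(m+1) ≤ |u k x| := by
    intro k m
    rcases le_or_gt (‖u k‖ - 1/(m+1)) 0 with h | h
    · exact ⟨0, by simp, le_trans h (abs_nonneg _)⟩
    · by_contra hcon
      push_neg at hcon
      have hble : ‖u k‖ ≤ ‖u k‖ - 1/(m+1) := by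
        apply ContinuousLinearMap.opNorm_le_bound _ h.le
        intro x
        rcases eq_or_ne x 0 with rfl | hx0
        · simp
        · have hxpos : 0 < ‖x‖ := norm_pos_iff.2 hx0
          have h1 : ‖(‖x‖⁻¹ • x)‖ ≤ 1 := by
            rw [norm_smul, norm_inv, norm_norm, inv_mul_cancel₀ hxpos.ne']
          have h2 := (hcon _ h1).le
          simp only [_root_.map_smul, smul_eq_mul, abs_mul, abs_inv, abs_norm] at h2
          rw [Real.norm_eq_abs]
          calc |u k x| = ‖x‖ * (‖x‖⁻¹ * |u k x|) := by field_simp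
            _ ≤ ‖x‖ * (‖u k‖ - 1/(m+1)) := mul_le_mul_of_nonneg_left h2 hxpos.le
            _ = (‖u k‖ - 1/(m+1)) * ‖x‖ := mul_comm _ _
      have hm : (0:ℝ) < 1/(m+1) := by positivity
      linarith
  choose xs hxs1 hxs2 using hx
  refine ⟨fun n => xs n.unpair.1 n.unpair.2, fun n => hxs1 _ _, ?_⟩
  intro ψ c hc0 hbound
  refine le_of_forall_pos_le_add ?_
  intro ε hε
  obtain ⟨k, hk⟩ := Metric.denseRange_iff.1 hu ψ (ε/3) (by positivity)
  obtain ⟨m, hm⟩ := exists_nat_one_div_lt (show (0:ℝ) < ε/3 by positivity)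
  have h1 : ‖ψ‖ ≤ ‖u k‖ + ε/3 := by
    have := abs_norm_sub_norm_le ψ (u k)
    have h' : ‖ψ - u k‖ < ε/3 := by rwa [← dist_eq_norm]
    have := (abs_le.1 this).2
    linarith
  have h2 : ‖u k‖ ≤ |u k (xs k m)| + 1/(m+1) := by linarith [hxs2 k m]
  have h3 : |u k (xs k m)| ≤ |ψ (xs k m)| + ε/3 := by
    have ha : |u k (xs k m) - ψ (xs k m)| ≤ ‖u k - ψ‖ * ‖xs k m‖ := by
      have := (u k - ψ).le_opNorm (xs k m)
      simpa [Real.norm_eq_abs] using this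
    have hb : ‖u k - ψ‖ * ‖xs k m‖ ≤ ‖u k - ψ‖ * 1 :=
      mul_le_mul_of_nonneg_left (hxs1 k m) (norm_nonneg _)
    have hcd : ‖u k - ψ‖ < ε/3 := by
      rw [norm_sub_rev, ← dist_eq_norm]; exact hk
    have := abs_sub_abs_le_abs_sub (u k (xs k m)) (ψ (xs k m))
    nlinarith
  have h4 : |ψ (xs k m)| ≤ c := by
    simpa [Nat.unpair_pair] using hbound (Nat.pair k m)
  have hm' : (1:ℝ)/(m+1) ≤ ε/3 := hm.le
  linarith

/-- If the dual of `X` is separable, so is `X`. -/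
theorem sep_of_dual_sep (X : Type*) [NormedAddCommGroup X] [NormedSpace ℝ X]
    [SeparableSpace (StrongDual ℝ X)] : SeparableSpace X := by
  obtain ⟨u, hu⟩ := exists_dense_seq (StrongDual ℝ X)
  have hx : ∀ k : ℕ, ∃ x : X, ‖x‖ ≤ 1 ∧ ‖u k‖ / 2 ≤ |u k x| := by
    intro k
    rcases eq_or_ne (u k) 0 with h | h
    · exact ⟨0, by simp, by simp [h]⟩
    · have hpos : 0 < ‖u k‖ := norm_pos_iff.2 h
      by_contra hcon
      push_neg at hcon
      have hble : ‖u k‖ ≤ ‖u k‖ / 2 := by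
        apply ContinuousLinearMap.opNorm_le_bound _ (by positivity)
        intro x
        rcases eq_or_ne x 0 with rfl | hx0
        · simp
        · have hxpos : 0 < ‖x‖ := norm_pos_iff.2 hx0
          have h1 : ‖(‖x‖⁻¹ • x)‖ ≤ 1 := by
            rw [norm_smul, norm_inv, norm_norm, inv_mul_cancel₀ hxpos.ne']
          have h2 := (hcon _ h1).le
          simp only [_root_.map_smul, smul_eq_mul, abs_mul, abs_inv, abs_norm] at h2
          rw [Real.norm_eq_abs]
          calc |u k x| = ‖x‖ * (‖x‖⁻¹ * |u k x|) := by field_simp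
            _ ≤ ‖x‖ * (‖u k‖ / 2) := mul_le_mul_of_nonneg_left h2 hxpos.le
            _ = (‖u k‖ / 2) * ‖x‖ := mul_comm _ _
      linarith
  choose xs hxs1 hxs2 using hx
  set M : Submodule ℝ X := (Submodule.span ℝ (Set.range xs)).topologicalClosure with hM
  have hMsep : IsSeparable (M : Set X) := by
    rw [hM, Submodule.topologicalClosure_coe]
    exact (((countable_range xs).isSeparable).span).closure
  have hMtop : M = ⊤ := by
    by_contra hne
    obtain ⟨z, hz⟩ : ∃ z : X, z ∉ M := by
      by_contra hcontra
      push_neg at hcontra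
      exact hne (eq_top_iff.2 fun z _ => hcontra z)
    obtain ⟨g, s, hgs, hsz⟩ :=
      geometric_hahn_banach_closed_point M.convex (Submodule.isClosed_topologicalClosure _) hz
    have hg0 : ∀ m ∈ M, g m = 0 := by
      intro m hm
      by_contra hgm
      have hmem : ((s + 1) / g m) • m ∈ M := M.smul_mem _ hm
      have h1 := hgs _ hmem
      rw [ContinuousLinearMap.map_smul, smul_eq_mul, div_mul_cancel₀ _ hgm] at h1
      linarith
    have hs0 : 0 < s := by simpa using hgs 0 M.zero_mem
    have hgz : 0 < g z := lt_trans hs0 hsz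
    have hgnorm : 0 < ‖g‖ := by
      have hgne : g ≠ 0 := fun hgeq => by simp [hgeq] at hgz
      exact norm_pos_iff.2 hgne
    obtain ⟨k, hk⟩ := Metric.denseRange_iff.1 hu g (‖g‖/4) (by positivity)
    have hdist : ‖g - u k‖ < ‖g‖/4 := by rwa [← dist_eq_norm]
    have h1 : 3 * ‖g‖ / 4 ≤ ‖u k‖ := by
      have ht := abs_norm_sub_norm_le g (u k)
      have h5 : ‖g‖ - ‖u k‖ ≤ ‖g - u k‖ := le_trans (le_abs_self _) ht
      linarith
    have h2 : 3 * ‖g‖ / 8 ≤ |u k (xs k)| := by linarith [hxs2 k]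
    have h3 : g (xs k) = 0 := hg0 _ ((Submodule.le_topologicalClosure _)
      (Submodule.subset_span (mem_range_self k)))
    have h4 : |u k (xs k)| ≤ ‖g‖/4 := by
      have ha : |u k (xs k) - g (xs k)| ≤ ‖u k - g‖ * ‖xs k‖ := by
        simpa [Real.norm_eq_abs] using (u k - g).le_opNorm (xs k)
      have hb : ‖u k - g‖ * ‖xs k‖ ≤ ‖u k - g‖ * 1 :=
        mul_le_mul_of_nonneg_left (hxs1 k) (norm_nonneg _)
      have hcd : ‖u k - g‖ < ‖g‖/4 := by rwa [norm_sub_rev] at hdist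
      rw [h3, sub_zero] at ha
      nlinarith
    linarith
  have huniv : IsSeparable (univ : Set X) := by
    have : (M : Set X) = univ := by rw [hMtop]; rfl
    rwa [this] at hMsep
  exact isSeparable_univ_iff.1 huniv

/-- Measurability via distances to a countable dense set. -/
theorem meas_of_dist {E : Type*} [NormedAddCommGroup E] [SeparableSpace E] [Nonempty E]
    [MeasurableSpace E] [BorelSpace E] {φ : ℝ → E}
    (h : ∀ y : E, Measurable fun x => ‖φ x - y‖) : Measurable φ := by
  apply measurable_of_isOpen
  intro s hs
  obtain ⟨e, he⟩ := exists_dense_seq E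
  have hcover : φ ⁻¹' s = ⋃ (p : ℕ × ℚ)
      (_ : 0 < (p.2:ℝ) ∧ Metric.ball (e p.1) (p.2:ℝ) ⊆ s), {x | ‖φ x - e p.1‖ < (p.2:ℝ)} := by
    ext x
    simp only [mem_preimage, mem_iUnion, mem_setOf_eq]
    constructor
    · intro hxs
      obtain ⟨r, hr, hball⟩ := Metric.isOpen_iff.1 hs _ hxs
      obtain ⟨n, hn⟩ := Metric.denseRange_iff.1 he (φ x) (r/3) (by positivity)
      obtain ⟨q, hq1, hq2⟩ := exists_rat_btwn (show r/3 < r/2 by linarith)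
      refine ⟨(n, q), ⟨lt_trans (by positivity) hq1, ?_⟩, ?_⟩
      · intro z hz
        apply hball
        rw [Metric.mem_ball] at hz ⊢
        have ht := dist_triangle z (e n) (φ x)
        have hn' : dist (e n) (φ x) < r/3 := by rwa [dist_comm]
        have : dist z (φ x) < r/2 + r/3 := by
          calc dist z (φ x) ≤ dist z (e n) + dist (e n) (φ x) := ht
            _ < (q:ℝ) + r/3 := by linarith
            _ ≤ r/2 + r/3 := by linarith [hq2.le]
        linarith
      · rw [← dist_eq_norm]
        calc dist (φ x) (e n) < r/3 := hn
          _ < q := hq1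
    · rintro ⟨⟨n, q⟩, ⟨hq0, hsub⟩, hlt⟩
      exact hsub (by rwa [Metric.mem_ball, dist_comm, dist_eq_norm, norm_sub_rev])
  rw [hcover]
  refine MeasurableSet.iUnion fun p => MeasurableSet.iUnion fun _ => ?_
  exact measurableSet_lt (h (e p.1)) measurable_const



/-- **Dunford–Pettis**: a separable dual space has the Radon–Nikodym property. -/
theorem rnp_dual (X : Type*) [NormedAddCommGroup X] [NormedSpace ℝ X]
    [SeparableSpace (StrongDual ℝ X)] : RadonNikodymProperty (StrongDual ℝ X) := by
  classical
  haveI : SeparableSpace X := sep_of_dual_sep X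
  rintro f ⟨K, hK⟩
  -- scalar components and their Lipschitz property
  have hLipv : ∀ v : X, LipschitzWith (K * ‖v‖₊) (fun t => f t v) := by
    intro v
    apply LipschitzWith.of_dist_le_mul
    intro s t
    rw [Real.dist_eq]
    have h0 : f s v - f t v = (f s - f t) v := by simp
    calc |f s v - f t v| = ‖(f s - f t) v‖ := by rw [h0, Real.norm_eq_abs]
      _ ≤ ‖f s - f t‖ * ‖v‖ := (f s - f t).le_opNorm v
      _ ≤ ((K : ℝ) * dist s t) * ‖v‖ := by
          have := hK.dist_le_mul s t
          rw [dist_eq_norm] at this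
          exact mul_le_mul_of_nonneg_right this (norm_nonneg v)
      _ = ((K * ‖v‖₊ : NNReal) : ℝ) * dist s t := by push_cast; ring
  have hdbound : ∀ (v : X) (x : ℝ), |deriv (fun t => f t v) x| ≤ (K : ℝ) * ‖v‖ := by
    intro v x
    have := abs_deriv_le (hLipv v) x
    simpa [NNReal.coe_mul, coe_nnnorm] using this
  -- countable dense additive subgroup
  obtain ⟨u, hu⟩ := exists_dense_seq X
  set D : Submodule ℤ X := Submodule.span ℤ (Set.range u) with hD
  have hDcount : (D : Set X).Countable := by
    have : Countable D := by rw [hD]; infer_instance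
    exact Set.countable_coe_iff.1 this
  have hDdense : Dense (D : Set X) := hu.mono Submodule.subset_span
  -- the good set
  set G : Set ℝ := {x | ∀ w ∈ D, DifferentiableAt ℝ (fun t => f t w) x} with hG
  have hGmeas : MeasurableSet G := by
    have hGi : G = ⋂ w ∈ (D : Set X), {x | DifferentiableAt ℝ (fun t => f t w) x} := by
      ext x; simp [hG]
    rw [hGi]
    exact MeasurableSet.biInter hDcount fun w _ => measurableSet_of_differentiableAt ℝ _
  have hGae : ∀ᵐ x, x ∈ G :=
    (ae_ball_iff hDcount).2 fun w _ => (hLipv w).ae_differentiableAt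
  -- difference quotient derivatives
  set dd : ℝ → X → ℝ := fun x w => deriv (fun t => f t w) x with hdd
  have hdd_sub : ∀ {x : ℝ}, x ∈ G → ∀ {w w' : X}, w ∈ D → w' ∈ D →
      |dd x w - dd x w'| ≤ (K : ℝ) * ‖w - w'‖ := by
    intro x hx w w' hw hw'
    have h1 : DifferentiableAt ℝ (fun t => f t w) x := hx w hw
    have h2 : DifferentiableAt ℝ (fun t => f t w') x := hx w' hw'
    have h3 : (fun t => f t (w - w')) = fun t => f t w - f t w' := by
      funext t; simp
    have h4 : dd x w - dd x w' = deriv (fun t => f t (w - w')) x := by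
      rw [h3, deriv_fun_sub h1 h2]
    rw [h4]
    exact hdbound (w - w') x
  have hdd_add : ∀ {x : ℝ}, x ∈ G → ∀ {w w' : X}, w ∈ D → w' ∈ D →
      dd x (w + w') = dd x w + dd x w' := by
    intro x hx w w' hw hw'
    have h3 : (fun t => f t (w + w')) = fun t => f t w + f t w' := by
      funext t; simp
    show deriv (fun t => f t (w + w')) x = _
    rw [h3, deriv_fun_add (hx w hw) (hx w' hw')]
  -- approximating sequences from D
  have happrox : ∀ v : X, ∃ a : ℕ → X, (∀ j, a j ∈ D) ∧ Tendsto a atTop (𝓝 v) := by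
    intro v
    have hv : v ∈ closure (D : Set X) := by rw [hDdense.closure_eq]; trivial
    exact mem_closure_iff_seq_limit.1 hv
  choose w hwD hwlim using happrox
  -- convergence of derivatives along the approximating sequences
  have hcauchy : ∀ {x : ℝ}, x ∈ G → ∀ v : X,
      ∃ L : ℝ, Tendsto (fun j => dd x (w v j)) atTop (𝓝 L) := by
    intro x hx v
    apply cauchySeq_tendsto_of_complete
    rw [Metric.cauchySeq_iff]
    intro ε hε
    have hwc : CauchySeq (w v) := (hwlim v).cauchySeq
    rw [Metric.cauchySeq_iff] at hwc
    obtain ⟨N, hN⟩ := hwc (ε / ((K : ℝ) + 1)) (by positivity)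
    refine ⟨N, fun m hm n hn => ?_⟩
    have h1 := hdd_sub hx (hwD v m) (hwD v n)
    have h2 := hN m hm n hn
    rw [dist_eq_norm] at h2
    rw [Real.dist_eq]
    calc |dd x (w v m) - dd x (w v n)| ≤ (K : ℝ) * ‖w v m - w v n‖ := h1
      _ ≤ (K : ℝ) * (ε / ((K : ℝ) + 1)) := by
          exact mul_le_mul_of_nonneg_left h2.le K.coe_nonneg
      _ < ε := by
          rw [mul_div_assoc']
          rw [div_lt_iff₀ (by positivity)]
          nlinarith [K.coe_nonneg]
  -- the extension of the derivative functional
  let el : ∀ x : ℝ, x ∈ G → X → ℝ := fun _ hx v => (hcauchy hx v).choose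
  have htend : ∀ (x : ℝ) (hx : x ∈ G) (v : X),
      Tendsto (fun j => dd x (w v j)) atTop (𝓝 (el x hx v)) :=
    fun _ hx v => (hcauchy hx v).choose_spec
  have hE1 : ∀ {x : ℝ} (hx : x ∈ G) (v : X) (a : ℕ → X), (∀ j, a j ∈ D) →
      Tendsto a atTop (𝓝 v) →
      Tendsto (fun j => dd x (a j)) atTop (𝓝 (el x hx v)) := by
    intro x hx v a haD halim
    have hz : Tendsto (fun j => a j - w v j) atTop (𝓝 0) := by
      simpa using halim.sub (hwlim v)
    have hzn : Tendsto (fun j => (K : ℝ) * ‖a j - w v j‖) atTop (𝓝 0) := by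
      simpa using (hz.norm.const_mul (K : ℝ))
    have hdiff : Tendsto (fun j => dd x (a j) - dd x (w v j)) atTop (𝓝 0) := by
      apply squeeze_zero_norm _ hzn
      intro j
      exact hdd_sub hx (haD j) (hwD v j)
    have := hdiff.add (htend x hx v)
    simpa using this
  have hel_D : ∀ {x : ℝ} (hx : x ∈ G) {d : X}, d ∈ D → el x hx d = dd x d := by
    intro x hx d hd
    exact tendsto_nhds_unique
      (hE1 hx d (fun _ => d) (fun _ => hd) tendsto_const_nhds) tendsto_const_nhds
  have hel_add : ∀ {x : ℝ} (hx : x ∈ G) (v v' : X),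
      el x hx (v + v') = el x hx v + el x hx v' := by
    intro x hx v v'
    have h1 := hE1 hx (v + v') (fun j => w v j + w v' j)
      (fun j => D.add_mem (hwD v j) (hwD v' j)) ((hwlim v).add (hwlim v'))
    have h2 : Tendsto (fun j => dd x (w v j) + dd x (w v' j)) atTop
        (𝓝 (el x hx v + el x hx v')) := (htend x hx v).add (htend x hx v')
    have h3 : (fun j => dd x (w v j + w v' j)) = fun j => dd x (w v j) + dd x (w v' j) :=
      funext fun j => hdd_add hx (hwD v j) (hwD v' j)
    rw [h3] at h1
    exact tendsto_nhds_unique h1 h2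
  have hel_lip : ∀ {x : ℝ} (hx : x ∈ G) (v v' : X),
      |el x hx v - el x hx v'| ≤ (K : ℝ) * ‖v - v'‖ := by
    intro x hx v v'
    refine le_of_tendsto_of_tendsto' ((htend x hx v).sub (htend x hx v')).abs
      (((((hwlim v).sub (hwlim v'))).norm.const_mul (K : ℝ))) ?_
    intro j
    exact hdd_sub hx (hwD v j) (hwD v' j)
  have hel_zero : ∀ {x : ℝ} (hx : x ∈ G), el x hx 0 = 0 := by
    intro x hx
    rw [hel_D hx D.zero_mem]
    show deriv (fun t => f t (0 : X)) x = 0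
    simp
  have hel_bound : ∀ {x : ℝ} (hx : x ∈ G) (v : X), |el x hx v| ≤ (K : ℝ) * ‖v‖ := by
    intro x hx v
    have := hel_lip hx v 0
    simpa [hel_zero hx] using this
  have hel_cont : ∀ {x : ℝ} (hx : x ∈ G), Continuous (el x hx) := by
    intro x hx
    apply (LipschitzWith.of_dist_le_mul (K := K) (f := el x hx) ?_).continuous
    intro v v'
    rw [Real.dist_eq, dist_eq_norm]
    exact hel_lip hx v v'
  -- the candidate derivative
  set φ : ℝ → StrongDual ℝ X := fun x =>
    if hx : x ∈ G then
      (AddMonoidHom.mk' (el x hx) (fun v v' => hel_add hx v v')).toRealLinearMap (hel_cont hx)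
    else 0 with hφ
  have hφ_apply : ∀ {x : ℝ} (hx : x ∈ G) (v : X), φ x v = el x hx v := by
    intro x hx v
    simp only [hφ, dif_pos hx]
    rfl
  have hφ_zero : ∀ {x : ℝ}, x ∉ G → φ x = 0 := by
    intro x hx
    simp only [hφ, dif_neg hx]
  have hφ_norm : ∀ x, ‖φ x‖ ≤ (K : ℝ) := by
    intro x
    by_cases hx : x ∈ G
    · apply ContinuousLinearMap.opNorm_le_bound _ K.coe_nonneg
      intro v
      rw [hφ_apply hx, Real.norm_eq_abs]
      exact hel_bound hx v
    · rw [hφ_zero hx]; simp [K.coe_nonneg]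
  -- measurability of evaluations
  have hφ_ev_meas : ∀ v : X, Measurable fun x => φ x v := by
    intro v
    apply measurable_of_tendsto_metrizable
      (f := fun j x => G.indicator (fun x' => dd x' (w v j)) x)
    · intro j
      apply Measurable.indicator _ hGmeas
      exact measurable_deriv _
    · rw [tendsto_pi_nhds]
      intro x
      by_cases hx : x ∈ G
      · simp only [indicator_of_mem hx]
        rw [hφ_apply hx]
        exact htend x hx v
      · simp only [indicator_of_notMem hx]
        rw [hφ_zero hx]
        simp only [ContinuousLinearMap.zero_apply]
        exact tendsto_const_nhds
  -- full measurability
  obtain ⟨ts, hts1, hts2⟩ := norming_seq X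
  borelize (StrongDual ℝ X)
  have hφ_meas : Measurable φ := by
    apply meas_of_dist
    intro y
    have hlub : ∀ x : ℝ, IsLUB (Set.range fun n => |φ x (ts n) - y (ts n)|) ‖φ x - y‖ := by
      intro x
      constructor
      · rintro r ⟨n, rfl⟩
        show |φ x (ts n) - y (ts n)| ≤ ‖φ x - y‖
        have h1 : |φ x (ts n) - y (ts n)| = ‖(φ x - y) (ts n)‖ := by
          rw [ContinuousLinearMap.sub_apply, Real.norm_eq_abs]
        rw [h1]
        calc ‖(φ x - y) (ts n)‖ ≤ ‖φ x - y‖ * ‖ts n‖ := (φ x - y).le_opNorm _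
          _ ≤ ‖φ x - y‖ * 1 := mul_le_mul_of_nonneg_left (hts1 n) (norm_nonneg _)
          _ = ‖φ x - y‖ := mul_one _
      · intro c hc
        have hc0 : 0 ≤ c := le_trans (abs_nonneg _) (hc ⟨0, rfl⟩)
        apply hts2 (φ x - y) c hc0
        intro n
        rw [ContinuousLinearMap.sub_apply]
        exact hc ⟨n, rfl⟩
    have heq : (fun x => ‖φ x - y‖) = fun x => ⨆ n, |φ x (ts n) - y (ts n)| :=
      funext fun x => ((hlub x).ciSup_eq).symm
    rw [heq]
    exact Measurable.iSup fun n => ((hφ_ev_meas (ts n)).sub measurable_const).abs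
  have hφ_sm : StronglyMeasurable φ := by
    rw [stronglyMeasurable_iff_measurable_separable]
    exact ⟨hφ_meas, (isSeparable_univ_iff.2 inferInstance).mono (subset_univ _)⟩
  -- integrability
  have hφ_int : ∀ a b : ℝ, IntervalIntegrable φ volume a b := by
    intro a b
    apply (intervalIntegrable_const (c := (K : ℝ))).mono_fun'
      hφ_sm.aestronglyMeasurable.restrict
    exact Filter.Eventually.of_forall fun x => hφ_norm x
  -- the primitive
  set F : ℝ → StrongDual ℝ X := fun x => f 0 + ∫ t in (0:ℝ)..x, φ t with hF
  -- a.e. identification of φ with scalar derivatives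
  have hae_v : ∀ v : X, ∀ᵐ t, φ t v = deriv (fun s => f s v) t := by
    intro v
    filter_upwards [hGae, (hLipv v).ae_differentiableAt] with t htG htv
    rw [hφ_apply htG]
    refine tendsto_nhds_unique (htend t htG v) ?_
    have hb : ∀ j, |dd t (w v j) - deriv (fun s => f s v) t| ≤ (K : ℝ) * ‖w v j - v‖ := by
      intro j
      have h1 : DifferentiableAt ℝ (fun s => f s (w v j)) t := htG _ (hwD v j)
      have h3 : (fun s => f s (w v j - v)) = fun s => f s (w v j) - f s v := by
        funext s; simp
      have h4 : dd t (w v j) - deriv (fun s => f s v) t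
          = deriv (fun s => f s (w v j - v)) t := by
        rw [h3, deriv_fun_sub h1 htv]
      rw [h4]
      exact hdbound (w v j - v) t
    have h0 : Tendsto (fun j => (K : ℝ) * ‖w v j - v‖) atTop (𝓝 0) := by
      have : Tendsto (fun j => w v j - v) atTop (𝓝 0) := by
        simpa using (hwlim v).sub (tendsto_const_nhds (x := v))
      simpa using (this.norm.const_mul (K : ℝ))
    have hsq := squeeze_zero_norm (fun j => by
      rw [Real.norm_eq_abs]; exact hb j) h0
    have := hsq.add (tendsto_const_nhds (x := deriv (fun s => f s v) t))
    simpa using this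
  -- F = f
  have hFf : F = f := by
    funext x
    ext v
    rw [hF]
    simp only [ContinuousLinearMap.add_apply]
    have h1 : (∫ t in (0:ℝ)..x, φ t) v = ∫ t in (0:ℝ)..x, φ t v := by
      have h := ContinuousLinearMap.intervalIntegral_comp_comm (𝕜 := ℝ)
        (inclusionInDoubleDual ℝ X v) (hφ_int 0 x)
      simpa using h.symm
    rw [h1]
    have h2 : ∫ t in (0:ℝ)..x, φ t v = ∫ t in (0:ℝ)..x, deriv (fun s => f s v) t :=
      intervalIntegral.integral_congr_ae ((hae_v v).mono fun t ht _ => ht)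
    rw [h2]
    rcases le_total 0 x with hx | hx
    · rw [lipschitz_integral_deriv (hLipv v) hx]
      ring
    · rw [intervalIntegral.integral_symm, lipschitz_integral_deriv (hLipv v) hx]
      ring
  -- local integrability
  have hφ_loc : LocallyIntegrable φ volume := by
    intro x
    refine ⟨Ioo (x - 1) (x + 1), Ioo_mem_nhds (by linarith) (by linarith), ?_⟩
    apply Integrable.mono' (g := fun _ => (K : ℝ))
      (integrableOn_const (by rw [Real.volume_Ioo]; exact ENNReal.ofReal_ne_top))
      hφ_sm.aestronglyMeasurable.restrict
    exact Filter.Eventually.of_forall fun t => hφ_norm t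
  -- Lebesgue differentiation
  set vf := IsUnifLocDoublingMeasure.vitaliFamily (volume : Measure ℝ) 1 with hvf
  have hLP := vf.ae_tendsto_average_norm_sub hφ_loc
  have final : ∀ᵐ x, HasDerivAt F (φ x) x := by
    filter_upwards [hLP] with x hx
    have hright : Tendsto (fun y => ⨍ t in Icc x y, ‖φ t - φ x‖) (𝓝[>] x) (𝓝 0) :=
      hx.comp (Real.tendsto_Icc_vitaliFamily_right x)
    have hleft : Tendsto (fun y => ⨍ t in Icc y x, ‖φ t - φ x‖) (𝓝[<] x) (𝓝 0) :=
      hx.comp (Real.tendsto_Icc_vitaliFamily_left x)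
    have hFsub : ∀ y : ℝ, F y - F x = ∫ t in x..y, φ t := by
      intro y
      rw [hF]
      have := intervalIntegral.integral_add_adjacent_intervals (hφ_int 0 x) (hφ_int x y)
      simp only [add_sub_add_left_eq_sub]
      rw [← this]
      abel
    have hslope : ∀ y : ℝ, y ≠ x →
        slope F x y - φ x = (y - x)⁻¹ • ∫ t in x..y, (φ t - φ x) := by
      intro y hy
      have hyx : y - x ≠ 0 := sub_ne_zero.2 hy
      rw [intervalIntegral.integral_sub (hφ_int x y) intervalIntegrable_const,
        intervalIntegral.integral_const, smul_sub, smul_smul,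
        inv_mul_cancel₀ hyx, one_smul, ← hFsub y]
      rw [slope_def_module]
    -- right-sided derivative
    have hHW1 : HasDerivWithinAt F (φ x) (Ici x) x := by
      rw [hasDerivWithinAt_iff_tendsto_slope, Ici_sdiff_left]
      rw [tendsto_iff_norm_sub_tendsto_zero]
      apply squeeze_zero' (Filter.Eventually.of_forall fun y => norm_nonneg _)
        _ hright
      filter_upwards [self_mem_nhdsWithin] with y hy
      have hxy : x < y := hy
      have hyx0 : (0:ℝ) < y - x := sub_pos.2 hxy
      rw [hslope y hxy.ne']
      rw [norm_smul, Real.norm_eq_abs, abs_inv, abs_of_pos hyx0]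
      have h1 : ‖∫ t in x..y, (φ t - φ x)‖ ≤ ∫ t in x..y, ‖φ t - φ x‖ :=
        intervalIntegral.norm_integral_le_integral_norm hxy.le
      have h2 : ∫ t in x..y, ‖φ t - φ x‖ = ∫ t in Icc x y, ‖φ t - φ x‖ := by
        rw [intervalIntegral.integral_of_le hxy.le, integral_Icc_eq_integral_Ioc]
      have h3 : ⨍ t in Icc x y, ‖φ t - φ x‖ = (y - x)⁻¹ * ∫ t in Icc x y, ‖φ t - φ x‖ := by
        rw [setAverage_eq, Real.volume_real_Icc_of_le hxy.le, smul_eq_mul]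
      rw [h3]
      rw [← h2]
      exact mul_le_mul_of_nonneg_left h1 (by positivity)
    -- left-sided derivative
    have hHW2 : HasDerivWithinAt F (φ x) (Iic x) x := by
      rw [hasDerivWithinAt_iff_tendsto_slope, Iic_diff_right]
      rw [tendsto_iff_norm_sub_tendsto_zero]
      apply squeeze_zero' (Filter.Eventually.of_forall fun y => norm_nonneg _)
        _ hleft
      filter_upwards [self_mem_nhdsWithin] with y hy
      have hxy : y < x := hy
      have hyx0 : (0:ℝ) < x - y := sub_pos.2 hxy
      rw [hslope y hxy.ne]
      rw [norm_smul, Real.norm_eq_abs, abs_inv, abs_of_neg (by linarith : y - x < 0)]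
      have h1 : ‖∫ t in y..x, (φ t - φ x)‖ ≤ ∫ t in y..x, ‖φ t - φ x‖ :=
        intervalIntegral.norm_integral_le_integral_norm hxy.le
      have h1' : ‖∫ t in x..y, (φ t - φ x)‖ ≤ ∫ t in y..x, ‖φ t - φ x‖ := by
        rw [intervalIntegral.integral_symm, norm_neg]
        exact h1
      have h2 : ∫ t in y..x, ‖φ t - φ x‖ = ∫ t in Icc y x, ‖φ t - φ x‖ := by
        rw [intervalIntegral.integral_of_le hxy.le, integral_Icc_eq_integral_Ioc]
      have h3 : ⨍ t in Icc y x, ‖φ t - φ x‖ = (x - y)⁻¹ * ∫ t in Icc y x, ‖φ t - φ x‖ := by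
        rw [setAverage_eq, Real.volume_real_Icc_of_le hxy.le, smul_eq_mul]
      rw [h3, ← h2, neg_sub]
      exact mul_le_mul_of_nonneg_left h1' (by positivity)
    have := hHW1.union hHW2
    rw [union_comm, Iic_union_Ici, hasDerivWithinAt_univ] at this
    exact this
  filter_upwards [final] with x hx
  rw [← hFf]
  exact hx.differentiableAt



/-- Transfer of RNP along a linear isometric isomorphism onto a dual space. -/
theorem rnp_iso {Y : Type*} [NormedAddCommGroup Y] [NormedSpace ℝ Y] [SeparableSpace Y]
    {X : Type*} [NormedAddCommGroup X] [NormedSpace ℝ X]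
    (iso : Y ≃ₗᵢ[ℝ] StrongDual ℝ X) : RadonNikodymProperty Y := by
  haveI : SeparableSpace (StrongDual ℝ X) :=
    iso.surjective.denseRange.separableSpace iso.continuous
  rintro f ⟨K, hK⟩
  have hg : ∀ᵐ x, DifferentiableAt ℝ (fun t => iso (f t)) x :=
    rnp_dual X _ ⟨1 * K, iso.lipschitz.comp hK⟩
  filter_upwards [hg] with x hx
  have heq : (fun t => iso.symm (iso (f t))) = f := by funext t; simp
  rw [← heq]
  exact (iso.symm.toContinuousLinearEquiv.differentiableAt).comp x hx

/-- A closed subspace of a reflexive space is reflexive. -/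
theorem subspace_reflexive {Z : Type*} [NormedAddCommGroup Z] [NormedSpace ℝ Z]
    (hZ : Function.Surjective (inclusionInDoubleDual ℝ Z)) (W : Submodule ℝ Z)
    (hW : IsClosed (W : Set Z)) : Function.Surjective (inclusionInDoubleDual ℝ W) := by
  intro F
  set ρ : StrongDual ℝ Z →L[ℝ] StrongDual ℝ W := (ContinuousLinearMap.compL ℝ W Z ℝ).flip W.subtypeL
    with hρ
  have hρ_apply : ∀ (ψ : StrongDual ℝ Z) (w : W), ρ ψ w = ψ w := fun ψ w => rfl
  obtain ⟨z, hz⟩ := hZ (F.comp ρ)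
  have hzW : z ∈ W := by
    by_contra hzW
    obtain ⟨g, s, hgs, hsz⟩ := geometric_hahn_banach_closed_point W.convex hW hzW
    have hg0 : ∀ m ∈ W, g m = 0 := by
      intro m hm
      by_contra hgm
      have hmem : ((s + 1) / g m) • m ∈ W := W.smul_mem _ hm
      have h1 := hgs _ hmem
      rw [ContinuousLinearMap.map_smul, smul_eq_mul, div_mul_cancel₀ _ hgm] at h1
      linarith
    have hρg : ρ g = 0 := by
      ext w
      rw [hρ_apply]
      simpa using hg0 w w.2
    have h1 : F (ρ g) = 0 := by rw [hρg]; simp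
    have h3 : g z = 0 := by
      have h2 := congrArg (fun T => T g) hz
      simp only [dual_def] at h2
      rw [h2]
      exact h1
    have hs0 : 0 < s := by simpa using hgs 0 W.zero_mem
    linarith [hsz, h3]
  refine ⟨⟨z, hzW⟩, ?_⟩
  ext ψ
  obtain ⟨Ψ, hΨ, -⟩ := exists_extension_norm_eq W ψ
  have h1 : ρ Ψ = ψ := by
    ext w
    rw [hρ_apply]
    exact hΨ w
  have h2 : F ψ = Ψ z := by
    rw [← h1]
    have := congrArg (fun T => T Ψ) hz
    simp only [dual_def] at this
    exact (by simpa using this.symm)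
  show ψ (⟨z, hzW⟩ : W) = F ψ
  rw [h2, ← hΨ ⟨z, hzW⟩]



end RNPaux

end RNPauxSection

set_option maxHeartbeats 1000000

/-- **Dunford–Pettis.**  Every separable Banach space which is (isometrically
isomorphic to) the dual of a Banach space satisfies the Radon–Nikodym property; in
particular every reflexive Banach space (i.e. one for which the canonical inclusion into the
double dual is surjective) satisfies the Radon–Nikodym property. -/
theorem radonNikodymProperty_of_separable_dual_and_of_reflexive
    {Y : Type u} [NormedAddCommGroup Y] [NormedSpace ℝ Y] [CompleteSpace Y]
    [TopologicalSpace.SeparableSpace Y]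
    {X : Type v} [NormedAddCommGroup X] [NormedSpace ℝ X] [CompleteSpace X]
    (iso : Y ≃ₗᵢ[ℝ] StrongDual ℝ X) :
    RadonNikodymProperty Y ∧
      ∀ (Z : Type w) [NormedAddCommGroup Z] [NormedSpace ℝ Z] [CompleteSpace Z],
        Function.Surjective (NormedSpace.inclusionInDoubleDual ℝ Z) →
          RadonNikodymProperty Z := by
  constructor
  · exact RNPaux.rnp_iso iso
  · intro Z _ _ _ hsurj
    rintro f ⟨K, hK⟩
    set W : Submodule ℝ Z := (Submodule.span ℝ (Set.range f)).topologicalClosure with hW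
    have hWclosed : IsClosed (W : Set Z) := Submodule.isClosed_topologicalClosure _
    haveI : CompleteSpace W := hWclosed.completeSpace_coe
    have hWsep : TopologicalSpace.IsSeparable (W : Set Z) := by
      rw [hW, Submodule.topologicalClosure_coe]
      exact ((TopologicalSpace.isSeparable_range hK.continuous).span).closure
    haveI : TopologicalSpace.SeparableSpace W := hWsep.separableSpace
    have hmem : ∀ x, f x ∈ W := fun x =>
      (Submodule.le_topologicalClosure _) (Submodule.subset_span (Set.mem_range_self x))
    set g : ℝ → W := fun x => ⟨f x, hmem x⟩ with hg
    have hgLip : LipschitzWith K g := by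
      apply LipschitzWith.of_dist_le_mul
      intro s t
      have h1 : dist (g s) (g t) = dist (f s) (f t) := rfl
      rw [h1]
      exact hK.dist_le_mul s t
    have hsurjW := RNPaux.subspace_reflexive hsurj W hWclosed
    have hiso :=
      LinearIsometryEquiv.ofSurjective (NormedSpace.inclusionInDoubleDualLi ℝ) hsurjW
    have hRNP : RadonNikodymProperty W := RNPaux.rnp_iso hiso
    have hg_diff := hRNP g ⟨K, hgLip⟩
    filter_upwards [hg_diff] with x hx
    have heq : f = fun t => W.subtypeL (g t) := funext fun t => rfl
    rw [heq]
    exact (W.subtypeL.differentiableAt).comp x hx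
end

section
/- Let $Y$ be a Banach space, $d \ge 1$, $p \in [1, \infty]$, and $\mu > 0$. For $x_\sharp \in \mathbb{R}^d$ define the weight $\rho_{\mu, x_\sharp}(x) = 1/\cosh(\mu\sqrt{1 + |x - x_\sharp|^2})$. Then the uniformly local norm $\|u\|_{L^p_{\mathrm{ul}}} = \sup_{a \in \mathbb{R}^d} \|u\|_{L^p(B(a,1), Y)}$ is equivalent to the norm $\sup_{x_\sharp \in \mathbb{R}^d} \|u\|_{L^p_{\rho_{\mu, x_\sharp}}(\mathbb{R}^d, Y)}$, i.e., there exist constants $c, C > 0$ independent of $u$ such that $c\|u\|_{L^p_{\mathrm{ul}}} \le \sup_{x_\sharp} \|u\|_{L^p_{\rho_{\mu, x_\sharp}}} \le C\|u\|_{L^p_{\mathrm{ul}}}$ for all locally $p$-integrable $u : \mathbb{R}^d \to Y$. -/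
open MeasureTheory ENNReal

/-- The uniformly local `Lᵖ` (extended) norm:
`‖u‖_{Lᵖ_ul} = ⨆ a, ‖u‖_{Lᵖ(B(a,1),Y)}`. -/
noncomputable def ulNorm {d : ℕ} {Y : Type*} [NormedAddCommGroup Y]
    (p : ℝ≥0∞) (u : EuclideanSpace ℝ (Fin d) → Y) : ℝ≥0∞ :=
  ⨆ a : EuclideanSpace ℝ (Fin d), eLpNorm u p (volume.restrict (Metric.ball a 1))

/-- The `ρ`-weighted `Lᵖ` (extended) norm: `(∫ ρ(x) ‖u(x)‖ᵖ dx)^{1/p}` for `p < ∞`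
and `esssup (ρ‖u‖)` for `p = ∞`. -/
noncomputable def weightedLpNorm {d : ℕ} {Y : Type*} [NormedAddCommGroup Y]
    (p : ℝ≥0∞) (ρ : EuclideanSpace ℝ (Fin d) → ℝ) (u : EuclideanSpace ℝ (Fin d) → Y) :
    ℝ≥0∞ :=
  if p = ⊤ then essSup (fun x => ENNReal.ofReal (ρ x) * (‖u x‖₊ : ℝ≥0∞)) volume
  else eLpNorm u p (volume.withDensity fun x => ENNReal.ofReal (ρ x))

section Aux

open Metric

variable {d : ℕ}

local notation "E" => EuclideanSpace ℝ (Fin d)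

private lemma rho_le_one (μ t : ℝ) : 1 / Real.cosh (μ * t) ≤ 1 := by
  rw [div_le_one (Real.cosh_pos _)]
  exact Real.one_le_cosh _

private lemma rho_pos (μ t : ℝ) : 0 < 1 / Real.cosh (μ * t) :=
  one_div_pos.2 (Real.cosh_pos _)

private lemma rho_lower {μ : ℝ} (hμ : 0 < μ) {a x : E} (hx : x ∈ ball a 1) :
    1 / Real.cosh (μ * Real.sqrt 2) ≤ 1 / Real.cosh (μ * Real.sqrt (1 + ‖x - a‖ ^ 2)) := by
  apply one_div_le_one_div_of_le (Real.cosh_pos _)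
  rw [Real.cosh_le_cosh]
  have h1 : ‖x - a‖ < 1 := by rw [← dist_eq_norm]; exact mem_ball.1 hx
  have h2 : Real.sqrt (1 + ‖x - a‖ ^ 2) ≤ Real.sqrt 2 :=
    Real.sqrt_le_sqrt (by nlinarith [norm_nonneg (x - a)])
  have h0 : (0:ℝ) ≤ Real.sqrt (1 + ‖x - a‖ ^ 2) := Real.sqrt_nonneg _
  rw [abs_of_nonneg (mul_nonneg hμ.le h0), abs_of_nonneg (mul_nonneg hμ.le (Real.sqrt_nonneg _))]
  exact mul_le_mul_of_nonneg_left h2 hμ.le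

private lemma rho_upper {μ : ℝ} (hμ : 0 < μ) (r : ℝ) (hr : 0 ≤ r) :
    1 / Real.cosh (μ * Real.sqrt (1 + r ^ 2)) ≤ 2 * Real.exp (-(μ * r)) := by
  have h1 : μ * r ≤ μ * Real.sqrt (1 + r ^ 2) := by
    refine mul_le_mul_of_nonneg_left ?_ hμ.le
    have h := Real.sqrt_le_sqrt (show r ^ 2 ≤ 1 + r ^ 2 by linarith)
    rwa [Real.sqrt_sq hr] at h
  have h2 : Real.exp (μ * r) / 2 ≤ Real.cosh (μ * Real.sqrt (1 + r ^ 2)) := by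
    rw [Real.cosh_eq]
    have h3 := (Real.exp_pos (-(μ * Real.sqrt (1 + r ^ 2)))).le
    have h4 := Real.exp_le_exp.2 h1
    linarith
  calc 1 / Real.cosh (μ * Real.sqrt (1 + r ^ 2)) ≤ 1 / (Real.exp (μ * r) / 2) :=
        one_div_le_one_div_of_le (by positivity) h2
    _ = 2 * Real.exp (-(μ * r)) := by
        rw [one_div_div, Real.exp_neg, div_eq_mul_inv]

private lemma w_meas (μ : ℝ) (xs : E) :
    Measurable fun x : E => ENNReal.ofReal (1 / Real.cosh (μ * Real.sqrt (1 + ‖x - xs‖ ^ 2))) := by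
  refine ENNReal.measurable_ofReal.comp ?_
  have hc : Continuous fun x : E => 1 / Real.cosh (μ * Real.sqrt (1 + ‖x - xs‖ ^ 2)) := by
    refine Continuous.div continuous_const ?_ fun x => (Real.cosh_pos _).ne'
    exact Real.continuous_cosh.comp (continuous_const.mul (Real.continuous_sqrt.comp
      (continuous_const.add (((continuous_id.sub continuous_const).norm).pow 2))))
  exact hc.measurable

private lemma exp_decay_lintegral_lt_top {μ : ℝ} (hμ : 0 < μ) :
    (∫⁻ a : E, ENNReal.ofReal (Real.exp (-(μ * ‖a‖)))) < ⊤ := by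
  set n : ℕ := d + 1 with hn
  set C : ℝ := Real.exp μ * (n.factorial : ℝ) / μ ^ n with hC
  have hCpos : 0 < C := by positivity
  have hpt : ∀ a : E, Real.exp (-(μ * ‖a‖)) ≤ C * (1 + ‖a‖) ^ (-(n : ℝ)) := by
    intro a
    have ht : (0:ℝ) < 1 + ‖a‖ := by positivity
    have key : (μ * (1 + ‖a‖)) ^ n / n.factorial ≤ Real.exp (μ * (1 + ‖a‖)) :=
      Real.pow_div_factorial_le_exp _ (by positivity) n
    have hpos : (0:ℝ) < (μ * (1 + ‖a‖)) ^ n / n.factorial := by positivity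
    have e2 : (Real.exp (μ * (1 + ‖a‖)))⁻¹ ≤ (n.factorial : ℝ) / (μ * (1 + ‖a‖)) ^ n := by
      rw [← inv_div]
      exact inv_anti₀ hpos key
    have e1 : Real.exp (-(μ * ‖a‖)) = Real.exp μ * (Real.exp (μ * (1 + ‖a‖)))⁻¹ := by
      rw [← Real.exp_neg, ← Real.exp_add]
      congr 1
      ring
    calc Real.exp (-(μ * ‖a‖)) = Real.exp μ * (Real.exp (μ * (1 + ‖a‖)))⁻¹ := e1
      _ ≤ Real.exp μ * ((n.factorial : ℝ) / (μ * (1 + ‖a‖)) ^ n) :=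
          mul_le_mul_of_nonneg_left e2 (Real.exp_pos μ).le
      _ = C * (1 + ‖a‖) ^ (-(n : ℝ)) := by
          rw [Real.rpow_neg ht.le, Real.rpow_natCast, hC, mul_pow]
          field_simp
  have hfin : (Module.finrank ℝ E : ℝ) < (n : ℝ) := by
    rw [finrank_euclideanSpace_fin, hn]
    exact_mod_cast lt_add_one d
  calc (∫⁻ a : E, ENNReal.ofReal (Real.exp (-(μ * ‖a‖))))
      ≤ ∫⁻ a : E, ENNReal.ofReal (C * (1 + ‖a‖) ^ (-(n : ℝ))) :=
        lintegral_mono fun a => ENNReal.ofReal_le_ofReal (hpt a)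
    _ = ∫⁻ a : E, ENNReal.ofReal C * ENNReal.ofReal ((1 + ‖a‖) ^ (-(n : ℝ))) := by
        simp_rw [← ENNReal.ofReal_mul hCpos.le]
    _ = ENNReal.ofReal C * ∫⁻ a : E, ENNReal.ofReal ((1 + ‖a‖) ^ (-(n : ℝ))) :=
        lintegral_const_mul' _ _ ENNReal.ofReal_ne_top
    _ < ⊤ := ENNReal.mul_lt_top ENNReal.ofReal_lt_top
        (integrable_one_add_norm hfin).lintegral_lt_top

private lemma essSup_le_iSup_ball (h : E → ℝ≥0∞) :
    essSup h volume ≤ ⨆ a : E, essSup h (volume.restrict (ball a 1)) := by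
  obtain ⟨s, hsc, hsd⟩ := TopologicalSpace.exists_countable_dense E
  set L := ⨆ a : E, essSup h (volume.restrict (ball a 1)) with hL
  have key : ∀ b ∈ s, ∀ᵐ x : E ∂volume, x ∈ ball b 1 → h x ≤ L := by
    intro b _
    have h1 : ∀ᵐ x ∂volume.restrict (ball b 1), h x ≤ L :=
      (ae_le_essSup h).mono fun x hx =>
        hx.trans (le_iSup (fun a : E => essSup h (volume.restrict (ball a 1))) b)
    exact (ae_restrict_iff' measurableSet_ball).1 h1
  have h2 : ∀ᵐ x : E ∂volume, ∀ b ∈ s, x ∈ ball b 1 → h x ≤ L := (ae_ball_iff hsc).2 key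
  refine essSup_le_of_ae_le L (h2.mono fun x hx => ?_)
  obtain ⟨b, hbs, hbx⟩ := hsd.exists_mem_open isOpen_ball ⟨x, mem_ball_self one_pos⟩
  exact hx b hbs (by rwa [mem_ball_comm] at hbx)

private lemma rpow_iSup_le {ι : Sort*} (f : ι → ℝ≥0∞) {e : ℝ} (he : 0 < e) :
    (⨆ i, f i) ^ e ≤ ⨆ i, (f i) ^ e := by
  have h1 : ∀ i, f i ≤ (⨆ i, (f i) ^ e) ^ (1 / e) := fun i => by
    have h2 := ENNReal.rpow_le_rpow (le_iSup (fun i => (f i) ^ e) i)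
      (by positivity : (0:ℝ) ≤ 1 / e)
    rwa [← ENNReal.rpow_mul, mul_one_div, div_self he.ne', ENNReal.rpow_one] at h2
  have h4 := ENNReal.rpow_le_rpow (iSup_le h1) he.le
  rwa [← ENNReal.rpow_mul, one_div_mul_cancel he.ne', ENNReal.rpow_one] at h4

end Aux

/-- For any `p ∈ [1,∞]` and `μ > 0`, with the weights
`ρ_{μ,x♯}(x) = 1 / cosh (μ √(1 + |x - x♯|²))`, the uniformly local norm is equivalent to
`sup_{x♯} ‖u‖_{Lᵖ_{ρ_{μ,x♯}}}`, with constants independent of `u`. -/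
theorem ulNorm_equiv_sup_weighted_norms
    {d : ℕ} {Y : Type*} [NormedAddCommGroup Y]
    (p : ℝ≥0∞) (hp : 1 ≤ p) (μ : ℝ) (hμ : 0 < μ) :
    ∃ c > (0 : ℝ), ∃ C > (0 : ℝ), ∀ u : EuclideanSpace ℝ (Fin d) → Y,
      AEStronglyMeasurable u volume →
        ENNReal.ofReal c * ulNorm p u ≤
            (⨆ xs : EuclideanSpace ℝ (Fin d),
              weightedLpNorm p (fun x => 1 / Real.cosh (μ * Real.sqrt (1 + ‖x - xs‖ ^ 2))) u) ∧
          (⨆ xs : EuclideanSpace ℝ (Fin d),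
              weightedLpNorm p (fun x => 1 / Real.cosh (μ * Real.sqrt (1 + ‖x - xs‖ ^ 2))) u) ≤
            ENNReal.ofReal C * ulNorm p u := by
  classical
  open Metric in
  set c0 : ℝ := 1 / Real.cosh (μ * Real.sqrt 2) with hc0
  have hc0pos : 0 < c0 := rho_pos μ _
  have hc0le : c0 ≤ 1 := rho_le_one μ _
  rcases eq_or_ne p ⊤ with rfl | hptop
  · -- case p = ∞
    refine ⟨c0, hc0pos, 1, one_pos, fun u hu => ?_⟩
    constructor
    · rw [ulNorm, ENNReal.mul_iSup]
      refine iSup_le fun a => le_iSup_of_le a ?_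
      rw [weightedLpNorm, if_pos rfl, eLpNorm_exponent_top, eLpNormEssSup,
        ← ENNReal.essSup_const_mul]
      calc essSup (fun x => ENNReal.ofReal c0 * (‖u x‖₊ : ℝ≥0∞)) (volume.restrict (ball a 1))
          ≤ essSup (fun x => ENNReal.ofReal (1 / Real.cosh (μ * Real.sqrt (1 + ‖x - a‖ ^ 2))) *
              (‖u x‖₊ : ℝ≥0∞)) (volume.restrict (ball a 1)) := by
            refine essSup_mono_ae ?_
            refine (ae_restrict_iff' measurableSet_ball).2 (ae_of_all _ fun x hx => ?_)
            exact mul_le_mul_left (ENNReal.ofReal_le_ofReal (rho_lower hμ hx)) _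
        _ ≤ _ := essSup_mono_measure
            (Measure.absolutelyContinuous_of_le Measure.restrict_le_self)
    · rw [ENNReal.ofReal_one, one_mul]
      refine iSup_le fun xs => ?_
      rw [weightedLpNorm, if_pos rfl]
      calc essSup (fun x => ENNReal.ofReal (1 / Real.cosh (μ * Real.sqrt (1 + ‖x - xs‖ ^ 2))) *
            (‖u x‖₊ : ℝ≥0∞)) volume
          ≤ essSup (fun x => (‖u x‖₊ : ℝ≥0∞)) volume := by
            refine essSup_mono_ae (ae_of_all _ fun x => ?_)
            calc ENNReal.ofReal (1 / Real.cosh (μ * Real.sqrt (1 + ‖x - xs‖ ^ 2))) *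
                  (‖u x‖₊ : ℝ≥0∞)
                ≤ 1 * (‖u x‖₊ : ℝ≥0∞) :=
                  mul_le_mul_left (ENNReal.ofReal_le_one.2 (rho_le_one μ _)) _
              _ = _ := one_mul _
        _ ≤ ⨆ a : EuclideanSpace ℝ (Fin d),
              essSup (fun x => (‖u x‖₊ : ℝ≥0∞)) (volume.restrict (ball a 1)) :=
            essSup_le_iSup_ball _
        _ = ulNorm ⊤ u := by
            rw [ulNorm]
            exact iSup_congr fun a => by rw [eLpNorm_exponent_top, eLpNormEssSup]; rfl
  · -- case p < ∞
    have hp0 : p ≠ 0 := (lt_of_lt_of_le zero_lt_one hp).ne'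
    set pr := p.toReal with hpr
    have hpr1 : 1 ≤ pr := by
      rw [hpr, ← ENNReal.toReal_one]
      exact ENNReal.toReal_mono hptop hp
    have hprpos : 0 < pr := lt_of_lt_of_le one_pos hpr1
    set w : EuclideanSpace ℝ (Fin d) → EuclideanSpace ℝ (Fin d) → ℝ≥0∞ :=
      fun xs x => ENNReal.ofReal (1 / Real.cosh (μ * Real.sqrt (1 + ‖x - xs‖ ^ 2))) with hw
    set V : ℝ≥0∞ := volume (ball (0 : EuclideanSpace ℝ (Fin d)) 1) with hV
    have hV0 : V ≠ 0 := (measure_ball_pos volume 0 one_pos).ne'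
    have hVtop : V ≠ ⊤ := measure_ball_lt_top.ne
    set I : ℝ≥0∞ := ∫⁻ a : EuclideanSpace ℝ (Fin d),
      ENNReal.ofReal (Real.exp (-(μ * ‖a‖))) with hI
    have hItop : I ≠ ⊤ := (exp_decay_lintegral_lt_top hμ).ne
    set K : ℝ≥0∞ := ENNReal.ofReal (2 * Real.exp μ) * I / V with hK
    have hKtop : K ≠ ⊤ :=
      (ENNReal.div_lt_top (ENNReal.mul_ne_top ENNReal.ofReal_ne_top hItop) hV0).ne
    set Ce : ℝ≥0∞ := K ^ (1 / pr) with hCe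
    have hCetop : Ce ≠ ⊤ := ENNReal.rpow_ne_top_of_nonneg (by positivity) hKtop
    have hCele : Ce ≤ ENNReal.ofReal (Ce.toReal + 1) := by
      conv_lhs => rw [← ENNReal.ofReal_toReal hCetop]
      exact ENNReal.ofReal_le_ofReal (by linarith)
    refine ⟨c0, hc0pos, Ce.toReal + 1, by positivity, fun u hu => ?_⟩
    have hh0 : AEMeasurable (fun x : EuclideanSpace ℝ (Fin d) => (‖u x‖₊ : ℝ≥0∞) ^ pr) volume :=
      hu.enorm.pow_const pr
    obtain ⟨h, hm, hae⟩ := hh0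
    have hh0' : AEMeasurable (fun x : EuclideanSpace ℝ (Fin d) => (‖u x‖₊ : ℝ≥0∞) ^ pr) volume :=
      ⟨h, hm, hae⟩
    set N : ℝ≥0∞ := ⨆ a : EuclideanSpace ℝ (Fin d), ∫⁻ x in ball a 1, h x with hN
    have hulN : ∀ a : EuclideanSpace ℝ (Fin d),
        eLpNorm u p (volume.restrict (ball a 1)) = (∫⁻ x in ball a 1, h x) ^ (1 / pr) := by
      intro a
      rw [eLpNorm_eq_lintegral_rpow_enorm_toReal hp0 hptop]
      congr 1
      exact lintegral_congr_ae (ae_restrict_of_ae hae)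
    have hNul : N ^ (1 / pr) ≤ ulNorm p u := by
      rw [ulNorm]
      calc N ^ (1 / pr) ≤ ⨆ a : EuclideanSpace ℝ (Fin d),
          (∫⁻ x in ball a 1, h x) ^ (1 / pr) := rpow_iSup_le _ (by positivity)
        _ = _ := iSup_congr fun a => (hulN a).symm
    have hW : ∀ xs : EuclideanSpace ℝ (Fin d),
        weightedLpNorm p (fun x => 1 / Real.cosh (μ * Real.sqrt (1 + ‖x - xs‖ ^ 2))) u
          = (∫⁻ x, w xs x * h x) ^ (1 / pr) := by
      intro xs
      rw [weightedLpNorm, if_neg hptop, eLpNorm_eq_lintegral_rpow_enorm_toReal hp0 hptop]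
      congr 1
      erw [lintegral_withDensity_eq_lintegral_mul₀ (w_meas μ xs).aemeasurable hh0']
      refine lintegral_congr_ae (hae.mono fun x hx => ?_)
      have hx' : (‖u x‖₊ : ℝ≥0∞) ^ pr = h x := hx
      simp only [Pi.mul_apply]
      rw [hx']
    constructor
    · -- lower bound
      rw [ulNorm, ENNReal.mul_iSup]
      refine iSup_le fun a => le_iSup_of_le a ?_
      rw [hW a, hulN a]
      have key : ENNReal.ofReal c0 ^ pr * ∫⁻ x in ball a 1, h x ≤ ∫⁻ x, w a x * h x := by
        calc ENNReal.ofReal c0 ^ pr * ∫⁻ x in ball a 1, h x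
            = ∫⁻ x in ball a 1, ENNReal.ofReal c0 ^ pr * h x :=
              (lintegral_const_mul _ hm).symm
          _ ≤ ∫⁻ x in ball a 1, w a x * h x := by
              refine setLIntegral_mono ((w_meas μ a).mul hm) fun x hx => ?_
              refine mul_le_mul_left ?_ _
              calc ENNReal.ofReal c0 ^ pr ≤ ENNReal.ofReal c0 ^ (1:ℝ) :=
                  ENNReal.rpow_le_rpow_of_exponent_ge (ENNReal.ofReal_le_one.2 hc0le) hpr1
                _ = ENNReal.ofReal c0 := ENNReal.rpow_one _
                _ ≤ w a x := ENNReal.ofReal_le_ofReal (rho_lower hμ hx)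
          _ ≤ ∫⁻ x, w a x * h x := setLIntegral_le_lintegral _ _
      calc ENNReal.ofReal c0 * (∫⁻ x in ball a 1, h x) ^ (1 / pr)
          = (ENNReal.ofReal c0 ^ pr * ∫⁻ x in ball a 1, h x) ^ (1 / pr) := by
            rw [ENNReal.mul_rpow_of_nonneg _ _ (by positivity : (0:ℝ) ≤ 1 / pr),
              ← ENNReal.rpow_mul, mul_one_div, div_self hprpos.ne', ENNReal.rpow_one]
        _ ≤ (∫⁻ x, w a x * h x) ^ (1 / pr) := ENNReal.rpow_le_rpow key (by positivity)
    · -- upper bound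
      by_cases hNtop : N = ⊤
      · have : ulNorm p u = ⊤ := by
          refine top_unique ?_
          rw [← ENNReal.top_rpow_of_pos (by positivity : (0:ℝ) < 1 / pr), ← hNtop]
          exact hNul
        rw [this, ENNReal.mul_top (by
          simp only [ne_eq, ENNReal.ofReal_eq_zero, not_le]
          positivity)]
        exact le_top
      refine iSup_le fun xs => ?_
      rw [hW xs]
      set h' : EuclideanSpace ℝ (Fin d) → ℝ≥0∞ := fun x => w xs x * h x with hh'
      have hm' : Measurable h' := (w_meas μ xs).mul hm
      set J : ℝ≥0∞ := ∫⁻ x, h' x with hJ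
      set F : EuclideanSpace ℝ (Fin d) → EuclideanSpace ℝ (Fin d) → ℝ≥0∞ :=
        fun x a => (ball a 1).indicator h' x with hF
      have hFm : AEMeasurable (Function.uncurry F) (volume.prod volume) := by
        have hFeq : Function.uncurry F = fun q : EuclideanSpace ℝ (Fin d) ×
            EuclideanSpace ℝ (Fin d) =>
            ({q : EuclideanSpace ℝ (Fin d) × EuclideanSpace ℝ (Fin d) |
              dist q.1 q.2 < 1}).indicator (fun q => h' q.1) q := by
          funext q
          by_cases hq : dist q.1 q.2 < 1 <;>
            simp [Function.uncurry, F, Set.indicator, Metric.mem_ball, hq]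
        rw [hFeq]
        exact ((hm'.comp measurable_fst).indicator
          (isOpen_lt (by fun_prop) continuous_const).measurableSet).aemeasurable
      have hswap : J * V = ∫⁻ a : EuclideanSpace ℝ (Fin d), ∫⁻ x in ball a 1, h' x := by
        calc J * V = ∫⁻ x, h' x * V := (lintegral_mul_const _ hm').symm
          _ = ∫⁻ x, ∫⁻ a, F x a := by
              refine lintegral_congr fun x => ?_
              have hx : ∀ a : EuclideanSpace ℝ (Fin d),
                  F x a = (ball x 1).indicator (fun _ => h' x) a := by
                intro a
                by_cases hq : dist x a < 1 <;>
                  simp [F, Set.indicator, Metric.mem_ball, hq, dist_comm]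
              simp_rw [hx]
              rw [lintegral_indicator measurableSet_ball, setLIntegral_const,
                Measure.addHaar_ball_center]
          _ = ∫⁻ a, ∫⁻ x, F x a := lintegral_lintegral_swap hFm
          _ = _ := lintegral_congr fun a => lintegral_indicator measurableSet_ball _
      have hinner : ∀ a : EuclideanSpace ℝ (Fin d), (∫⁻ x in ball a 1, h' x) ≤
          ENNReal.ofReal (2 * Real.exp μ) * N *
            ENNReal.ofReal (Real.exp (-(μ * ‖a - xs‖))) := by
        intro a
        have hble : ∀ x ∈ ball a 1, h' x ≤
            (ENNReal.ofReal (2 * Real.exp μ) * ENNReal.ofReal (Real.exp (-(μ * ‖a - xs‖)))) *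
              h x := by
          intro x hx
          refine mul_le_mul_left ?_ _
          rw [← ENNReal.ofReal_mul (by positivity)]
          refine ENNReal.ofReal_le_ofReal ?_
          calc 1 / Real.cosh (μ * Real.sqrt (1 + ‖x - xs‖ ^ 2))
              ≤ 2 * Real.exp (-(μ * ‖x - xs‖)) := rho_upper hμ _ (norm_nonneg _)
            _ ≤ 2 * Real.exp μ * Real.exp (-(μ * ‖a - xs‖)) := by
                rw [mul_assoc, ← Real.exp_add]
                refine mul_le_mul_of_nonneg_left (Real.exp_le_exp.2 ?_) (by norm_num)
                have htri : ‖a - xs‖ ≤ ‖a - x‖ + ‖x - xs‖ := by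
                  simpa [sub_add_sub_cancel] using norm_add_le (a - x) (x - xs)
                have hax : ‖a - x‖ < 1 := by
                  rw [← dist_eq_norm, dist_comm]
                  exact mem_ball.1 hx
                nlinarith [mul_le_mul_of_nonneg_left htri hμ.le,
                  mul_le_mul_of_nonneg_left hax.le hμ.le]
        calc ∫⁻ x in ball a 1, h' x
            ≤ ∫⁻ x in ball a 1,
                (ENNReal.ofReal (2 * Real.exp μ) * ENNReal.ofReal (Real.exp (-(μ * ‖a - xs‖)))) *
                  h x := setLIntegral_mono (measurable_const.mul hm) hble
          _ = (ENNReal.ofReal (2 * Real.exp μ) * ENNReal.ofReal (Real.exp (-(μ * ‖a - xs‖)))) *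
                ∫⁻ x in ball a 1, h x := lintegral_const_mul _ hm
          _ ≤ (ENNReal.ofReal (2 * Real.exp μ) * ENNReal.ofReal (Real.exp (-(μ * ‖a - xs‖)))) *
                N := by
              refine mul_le_mul_right ?_ _
              exact le_iSup (fun b : EuclideanSpace ℝ (Fin d) => ∫⁻ x in Metric.ball b 1, h x) a
          _ = _ := by ring
      have hJV : J * V ≤ ENNReal.ofReal (2 * Real.exp μ) * I * N := by
        rw [hswap]
        calc (∫⁻ a : EuclideanSpace ℝ (Fin d), ∫⁻ x in ball a 1, h' x)
            ≤ ∫⁻ a : EuclideanSpace ℝ (Fin d), ENNReal.ofReal (2 * Real.exp μ) * N *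
                ENNReal.ofReal (Real.exp (-(μ * ‖a - xs‖))) := lintegral_mono hinner
          _ = ENNReal.ofReal (2 * Real.exp μ) * N *
                ∫⁻ a : EuclideanSpace ℝ (Fin d),
                  ENNReal.ofReal (Real.exp (-(μ * ‖a - xs‖))) :=
              lintegral_const_mul' _ _
                (ENNReal.mul_ne_top ENNReal.ofReal_ne_top hNtop)
          _ = ENNReal.ofReal (2 * Real.exp μ) * N * I := by
              congr 1
              exact lintegral_sub_right_eq_self
                (fun a : EuclideanSpace ℝ (Fin d) => ENNReal.ofReal (Real.exp (-(μ * ‖a‖)))) xs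
          _ = ENNReal.ofReal (2 * Real.exp μ) * I * N := by ring
      have hJ2 : J ≤ K * N := by
        have h5 : J ≤ ENNReal.ofReal (2 * Real.exp μ) * I * N / V :=
          (ENNReal.le_div_iff_mul_le (Or.inl hV0) (Or.inl hVtop)).2 hJV
        calc J ≤ ENNReal.ofReal (2 * Real.exp μ) * I * N / V := h5
          _ = K * N := by
              rw [hK, div_eq_mul_inv, div_eq_mul_inv]
              ring
      calc J ^ (1 / pr) ≤ (K * N) ^ (1 / pr) := ENNReal.rpow_le_rpow hJ2 (by positivity)
        _ = K ^ (1 / pr) * N ^ (1 / pr) :=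
            ENNReal.mul_rpow_of_nonneg _ _ (by positivity)
        _ ≤ ENNReal.ofReal (Ce.toReal + 1) * ulNorm p u := mul_le_mul' hCele hNul
end

section
/- Let $Y_2 \subseteq Y_1$ be Banach spaces with $Y_1$ infinite-dimensional and the embedding $Y_2 \hookrightarrow Y_1$ compact, and let $p \in [1, \infty]$. Then $L^p_{\mathrm{ul-w}}(\mathbb{R}^d, Y_2)$ is not dense in $L^p_{\mathrm{ul-w}}(\mathbb{R}^d, Y_1)$ for the uniformly local norm, even if $Y_2$ is dense in $Y_1$. -/
open MeasureTheory ENNReal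

section Aux

variable {d : ℕ} {Y1 : Type*} [NormedAddCommGroup Y1]

/-- Center of the `n`-th ball: `(3n, 0, …, 0)`. -/
noncomputable def ccAux (hd : 0 < d) (n : ℕ) : EuclideanSpace ℝ (Fin d) :=
  (3 * n : ℝ) • EuclideanSpace.single (⟨0, hd⟩ : Fin d) (1 : ℝ)

/-- Index of the ball a point belongs to (if any). -/
noncomputable def nnAux (hd : 0 < d) (x : EuclideanSpace ℝ (Fin d)) : ℕ :=
  (round (x ⟨0, hd⟩ / 3)).toNat

/-- The test function: equals `y n` on the ball around `ccAux hd n`, `0` elsewhere. -/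
noncomputable def uuAux (hd : 0 < d) (y : ℕ → Y1) : EuclideanSpace ℝ (Fin d) → Y1 :=
  (⋃ n : ℕ, Metric.ball (ccAux hd n) 1).indicator (fun x => y (nnAux hd x))

theorem nnAux_eq (hd : 0 < d) {n : ℕ} {x : EuclideanSpace ℝ (Fin d)}
    (hx : x ∈ Metric.ball (ccAux hd n) 1) : nnAux hd x = n := by
  have hcoord : |x ⟨0, hd⟩ - 3 * n| < 1 := by
    have h1 : |(x - ccAux hd n) ⟨0, hd⟩| ≤ ‖x - ccAux hd n‖ := by
      rw [EuclideanSpace.norm_eq]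
      calc |(x - ccAux hd n) ⟨0, hd⟩| = Real.sqrt (‖(x - ccAux hd n) ⟨0, hd⟩‖ ^ 2) := by
            rw [Real.sqrt_sq_eq_abs, abs_norm, Real.norm_eq_abs]
        _ ≤ _ := Real.sqrt_le_sqrt (Finset.single_le_sum
            (fun j _ => sq_nonneg ‖(x - ccAux hd n) j‖) (Finset.mem_univ _))
    have h2 : ‖x - ccAux hd n‖ < 1 := by
      rw [Metric.mem_ball, dist_eq_norm] at hx; exact hx
    have h3 : (x - ccAux hd n) ⟨0, hd⟩ = x ⟨0, hd⟩ - 3 * n := by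
      simp [ccAux, EuclideanSpace.single_apply]
    rw [h3] at h1; linarith
  have : round (x ⟨0, hd⟩ / 3) = (n : ℤ) := by
    rw [round_eq]
    have : ⌊x ⟨0, hd⟩ / 3 + 1 / 2⌋ = (n : ℤ) := by
      rw [Int.floor_eq_iff]
      rw [abs_lt] at hcoord
      push_cast
      constructor <;> nlinarith
    exact this
  rw [nnAux, this, Int.toNat_natCast]

theorem uuAux_eq (hd : 0 < d) {y : ℕ → Y1} {n : ℕ} {x : EuclideanSpace ℝ (Fin d)}
    (hx : x ∈ Metric.ball (ccAux hd n) 1) : uuAux hd y x = y n := by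
  rw [uuAux, Set.indicator_of_mem (Set.mem_iUnion.mpr ⟨n, hx⟩), nnAux_eq hd hx]

theorem uuAux_meas (hd : 0 < d) (y : ℕ → Y1) : AEStronglyMeasurable (uuAux hd y) volume := by
  borelize Y1
  have hNmeas : Measurable (nnAux hd) := by
    apply Measurable.comp (f := fun x : EuclideanSpace ℝ (Fin d) => round (x ⟨0, hd⟩ / 3))
      (g := Int.toNat)
    · exact measurable_from_top
    · simp only [round_eq]
      exact (((EuclideanSpace.proj (⟨0, hd⟩ : Fin d)).continuous.measurable).div_const 3
        |>.add_const _).floor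
  have hmeas : Measurable (uuAux hd y) := by
    apply Measurable.indicator
    · exact (measurable_from_top (f := y)).comp hNmeas
    · exact (isOpen_iUnion fun n => Metric.isOpen_ball).measurableSet
  have hsep : TopologicalSpace.IsSeparable (Set.range (uuAux hd y)) := by
    apply TopologicalSpace.IsSeparable.mono (Set.countable_range y |>.insert 0).isSeparable
    rintro v ⟨x, rfl⟩
    by_cases hx : x ∈ ⋃ n : ℕ, Metric.ball (ccAux hd n) 1
    · rw [uuAux, Set.indicator_of_mem hx]; exact Set.mem_insert_iff.mpr (Or.inr ⟨_, rfl⟩)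
    · rw [uuAux, Set.indicator_of_notMem hx]; exact Set.mem_insert _ _
  exact (stronglyMeasurable_iff_measurable_separable.mpr ⟨hmeas, hsep⟩).aestronglyMeasurable

end Aux

/-- Let `Y₂ ⊆ Y₁` be Banach spaces (inclusion realized by an injective
compact continuous linear map `J`) with `Y₁` infinite-dimensional, and let `p ∈ [1,∞]`.
Then `Lᵖ_{ul-w}(ℝᵈ, Y₂)` is not dense in `Lᵖ_{ul-w}(ℝᵈ, Y₁)` for the uniformly local norm,
even if `Y₂` is dense in `Y₁`: there is `u ∈ Lᵖ_{ul-w}(ℝᵈ, Y₁)` at uniformly local distance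
`≥ ε > 0` from every element of `Lᵖ_{ul-w}(ℝᵈ, Y₂)`. -/
theorem Lp_ulw_Y2_not_dense_in_Lp_ulw_Y1
    {d : ℕ} (hd : 0 < d) {Y1 Y2 : Type*}
    [NormedAddCommGroup Y1] [NormedSpace ℝ Y1]
    [NormedAddCommGroup Y2] [NormedSpace ℝ Y2]
    (hY1 : ¬ FiniteDimensional ℝ Y1)
    (J : Y2 →L[ℝ] Y1) (hJinj : Function.Injective J) (hJcomp : IsCompactOperator J)
    (hJdense : DenseRange J)
    (p : ℝ≥0∞) (hp : 1 ≤ p) :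
    ∃ u : EuclideanSpace ℝ (Fin d) → Y1,
      AEStronglyMeasurable u volume ∧ ulNorm p u < ⊤ ∧
      ∃ ε > (0 : ℝ), ∀ g : EuclideanSpace ℝ (Fin d) → Y2,
        AEStronglyMeasurable g volume → ulNorm p g < ⊤ →
        ENNReal.ofReal ε ≤ ulNorm p (fun x => u x - J (g x)) := by
  classical
  obtain ⟨R, y, hR1, hyR, hysep⟩ := exists_seq_norm_le_one_le_norm_sub (𝕜 := ℝ) hY1
  set E := EuclideanSpace ℝ (Fin d)
  set u := uuAux hd y with hu
  -- basic facts about the unit-ball volume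
  set V := volume (Metric.ball (0 : E) 1) with hVdef
  have hV0 : V ≠ 0 := (Metric.measure_ball_pos volume _ one_pos).ne'
  have hVtop : V ≠ ⊤ := measure_ball_lt_top.ne
  have hVball : ∀ a : E, volume (Metric.ball a 1) = V := fun a =>
    Measure.addHaar_ball_center volume a 1
  set W := max 1 V with hWdef
  have hW1 : (1 : ℝ≥0∞) ≤ W := le_max_left _ _
  have hW0 : W ≠ 0 := fun h => by simp [h] at hW1
  have hWtop : W ≠ ⊤ := by
    rw [hWdef]; exact (max_lt (by norm_num) hVtop.lt_top).ne
  -- uniform bound on u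
  have hubound : ∀ x, ‖u x‖ ≤ R := by
    intro x
    rw [hu, uuAux]
    by_cases hx : x ∈ ⋃ n : ℕ, Metric.ball (ccAux hd n) 1
    · rw [Set.indicator_of_mem hx]; exact hyR _
    · rw [Set.indicator_of_notMem hx]; simp; linarith
  refine ⟨u, uuAux_meas hd y, ?_, ?_⟩
  · -- finiteness of ulNorm p u
    refine lt_of_le_of_lt (iSup_le fun a => ?_)
      (ENNReal.mul_lt_top (ENNReal.rpow_lt_top_of_nonneg (by positivity) hVtop)
        ENNReal.ofReal_lt_top :
        V ^ p.toReal⁻¹ * ENNReal.ofReal R < ⊤)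
    calc eLpNorm u p (volume.restrict (Metric.ball a 1))
        ≤ (volume.restrict (Metric.ball a 1)) Set.univ ^ p.toReal⁻¹ * ENNReal.ofReal R :=
          eLpNorm_le_of_ae_bound (Filter.Eventually.of_forall hubound)
      _ = V ^ p.toReal⁻¹ * ENNReal.ofReal R := by
          rw [Measure.restrict_apply_univ, hVball]
  -- the main estimate
  set X := ENNReal.ofReal (1/4) * (V / 4) with hXdef
  have hX0 : X ≠ 0 := by
    rw [hXdef]
    refine mul_ne_zero (by simp) ?_
    simp [ENNReal.div_eq_zero_iff, hV0]
  have hXtop : X ≠ ⊤ := by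
    rw [hXdef]
    exact (ENNReal.mul_lt_top ENNReal.ofReal_lt_top
      (ENNReal.div_lt_top hVtop (by norm_num))).ne
  set ε := (X / W).toReal with hεdef
  have hXW_top : X / W ≠ ⊤ := (ENNReal.div_lt_top hXtop hW0).ne
  have hXW_0 : X / W ≠ 0 := by
    simp only [ne_eq, ENNReal.div_eq_zero_iff, not_or]
    exact ⟨hX0, hWtop⟩
  have hεpos : 0 < ε := ENNReal.toReal_pos hXW_0 hXW_top
  have hεeq : ENNReal.ofReal ε = X / W := ENNReal.ofReal_toReal hXW_top
  refine ⟨ε, hεpos, ?_⟩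
  intro g hg hgfin
  by_contra hcon
  rw [not_le] at hcon
  -- hcon : ulNorm p (fun x => u x - J (g x)) < ofReal ε
  set C := ulNorm p g with hCdef
  set D := C * W with hDdef
  have hDtop : D ≠ ⊤ := (ENNReal.mul_lt_top hgfin hWtop.lt_top).ne
  set M := (4 * D / V).toReal + 1 with hMdef
  have hM1 : (1 : ℝ) ≤ M := by
    rw [hMdef]; have := ENNReal.toReal_nonneg (a := 4 * D / V); linarith
  have hMofReal : ENNReal.ofReal M = 4 * D / V + 1 := by
    rw [hMdef, ENNReal.ofReal_add ENNReal.toReal_nonneg zero_le_one,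
      ENNReal.ofReal_toReal, ENNReal.ofReal_one]
    exact (ENNReal.div_lt_top (ENNReal.mul_ne_top (by norm_num) hDtop) hV0).ne
  -- the exponent bound
  have hVe : V ^ (1 / (1 : ℝ≥0∞).toReal - 1 / p.toReal) ≤ W := by
    have he0 : 0 ≤ 1 / (1 : ℝ≥0∞).toReal - 1 / p.toReal := by
      simp only [ENNReal.toReal_one]
      rcases eq_or_ne p ⊤ with hptop | hptop
      · simp [hptop]
      · have h1 : 1 ≤ p.toReal := by
          rw [← ENNReal.toReal_one]
          exact ENNReal.toReal_mono hptop hp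
        have : 1 / p.toReal ≤ 1 := by
          rw [div_le_one (by linarith)]; linarith
        linarith
    rcases le_total V 1 with hVle | hVge
    · exact le_trans (ENNReal.rpow_le_one hVle he0) hW1
    · refine le_trans ?_ (le_max_right _ _)
      have he1 : 1 / (1 : ℝ≥0∞).toReal - 1 / p.toReal ≤ 1 := by
        simp only [ENNReal.toReal_one]
        have : 0 ≤ 1 / p.toReal := by positivity
        linarith
      calc V ^ (1 / (1 : ℝ≥0∞).toReal - 1 / p.toReal) ≤ V ^ (1:ℝ) :=
            ENNReal.rpow_le_rpow_of_exponent_le hVge he1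
        _ = V := ENNReal.rpow_one V
  -- extraction of good points in each ball
  have key : ∀ n : ℕ, ∃ x : E, x ∈ Metric.ball (ccAux hd n) 1 ∧ ‖g x‖ < M ∧
      ‖u x - J (g x)‖ < 1/4 := by
    intro n
    set B := Metric.ball (ccAux hd n) 1 with hBdef
    set μB := volume.restrict B with hμBdef
    have hμBuniv : μB Set.univ = V := by
      rw [hμBdef, Measure.restrict_apply_univ, hVball]
    have hfg : AEStronglyMeasurable (fun x => u x - J (g x)) μB :=
      ((uuAux_meas hd y).sub (J.continuous.comp_aestronglyMeasurable hg)).restrict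
    have hgB : AEStronglyMeasurable g μB := hg.restrict
    -- L¹ bounds
    have hI1 : ∫⁻ x, ‖u x - J (g x)‖₊ ∂μB ≤ X := by
      calc ∫⁻ x, ‖u x - J (g x)‖₊ ∂μB = eLpNorm (fun x => u x - J (g x)) 1 μB :=
            (eLpNorm_one_eq_lintegral_enorm (f := fun x => u x - J (g x)) (μ := μB)).symm
        _ ≤ eLpNorm (fun x => u x - J (g x)) p μB *
              μB Set.univ ^ (1 / (1 : ℝ≥0∞).toReal - 1 / p.toReal) :=
            eLpNorm_le_eLpNorm_mul_rpow_measure_univ hp hfg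
        _ ≤ ENNReal.ofReal ε * W := by
            refine mul_le_mul' ?_ (by rw [hμBuniv]; exact hVe)
            exact le_trans (le_iSup (fun a : E =>
              eLpNorm (fun x => u x - J (g x)) p (volume.restrict (Metric.ball a 1)))
              (ccAux hd n)) hcon.le
        _ = X := by rw [hεeq, ENNReal.div_mul_cancel hW0 hWtop]
    have hI2 : ∫⁻ x, ‖g x‖₊ ∂μB ≤ D := by
      calc ∫⁻ x, ‖g x‖₊ ∂μB = eLpNorm g 1 μB := (eLpNorm_one_eq_lintegral_enorm (f := g) (μ := μB)).symm
        _ ≤ eLpNorm g p μB * μB Set.univ ^ (1 / (1 : ℝ≥0∞).toReal - 1 / p.toReal) :=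
            eLpNorm_le_eLpNorm_mul_rpow_measure_univ hp hgB
        _ ≤ C * W := by
            refine mul_le_mul' ?_ (by rw [hμBuniv]; exact hVe)
            exact le_iSup (fun a : E => eLpNorm g p (volume.restrict (Metric.ball a 1)))
              (ccAux hd n)
    -- Chebyshev
    set A1 := {x : E | ENNReal.ofReal (1/4) ≤ (‖u x - J (g x)‖₊ : ℝ≥0∞)} with hA1def
    set A2 := {x : E | ENNReal.ofReal M ≤ (‖g x‖₊ : ℝ≥0∞)} with hA2def
    have hμA1 : μB A1 ≤ V / 4 := by
      have hmar := mul_meas_ge_le_lintegral₀ (μ := μB)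
        (f := fun x => (‖u x - J (g x)‖₊ : ℝ≥0∞)) hfg.enorm (ENNReal.ofReal (1/4))
      have h14 : (ENNReal.ofReal (1/4) : ℝ≥0∞) ≠ 0 := by simp
      have h14t : (ENNReal.ofReal (1/4) : ℝ≥0∞) ≠ ⊤ := ENNReal.ofReal_ne_top
      have : ENNReal.ofReal (1/4) * μB A1 ≤ ENNReal.ofReal (1/4) * (V / 4) :=
        le_trans hmar (le_trans hI1 (le_of_eq hXdef))
      exact (ENNReal.mul_le_mul_iff_right h14 h14t).mp this
    have hμA2 : μB A2 ≤ V / 4 := by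
      have hmar := mul_meas_ge_le_lintegral₀ (μ := μB)
        (f := fun x => (‖g x‖₊ : ℝ≥0∞)) hgB.enorm (ENNReal.ofReal M)
      have hM0 : (ENNReal.ofReal M : ℝ≥0∞) ≠ 0 := by
        simp only [ne_eq, ENNReal.ofReal_eq_zero, not_le]; linarith
      have hMt : (ENNReal.ofReal M : ℝ≥0∞) ≠ ⊤ := ENNReal.ofReal_ne_top
      have hDM : D ≤ ENNReal.ofReal M * (V / 4) := by
        rw [mul_comm, hMofReal, mul_add, mul_one]
        refine le_trans ?_ le_self_add
        have heq : V / 4 * (4 * D / V) = D := by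
          calc V / 4 * (4 * D / V) = V / 4 * (4 * (D / V)) := by rw [mul_div_assoc]
            _ = V / 4 * 4 * (D / V) := by ring
            _ = V * (D / V) := by rw [ENNReal.div_mul_cancel (by norm_num) (by norm_num)]
            _ = D := ENNReal.mul_div_cancel hV0 hVtop
        rw [heq]
      have : ENNReal.ofReal M * μB A2 ≤ ENNReal.ofReal M * (V / 4) :=
        le_trans hmar (le_trans hI2 hDM)
      exact (ENNReal.mul_le_mul_iff_right hM0 hMt).mp this
    -- the complement has positive measure
    have hcompl : μB ((A1 ∪ A2)ᶜ) ≠ 0 := by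
      intro h0
      have h1 : μB Set.univ ≤ μB (A1 ∪ A2) + μB ((A1 ∪ A2)ᶜ) := by
        rw [← Set.union_compl_self (A1 ∪ A2)]
        exact measure_union_le _ _
      rw [h0, add_zero, hμBuniv] at h1
      have h2 : μB (A1 ∪ A2) ≤ V / 4 + V / 4 :=
        le_trans (measure_union_le _ _) (add_le_add hμA1 hμA2)
      have h3 : V / 4 + V / 4 = V / 2 := by
        rw [ENNReal.div_add_div_same, ← two_mul,
          show (4 : ℝ≥0∞) = 2 * 2 by norm_num,
          ENNReal.mul_div_mul_left _ _ (by norm_num) (by norm_num)]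
      have h4 : V ≤ V / 2 := le_trans h1 (le_trans h2 h3.le)
      exact absurd h4 (not_le.mpr (ENNReal.half_lt_self hV0 hVtop))
    have hne : ((A1 ∪ A2)ᶜ ∩ B).Nonempty := by
      rw [hμBdef, Measure.restrict_apply' measurableSet_ball] at hcompl
      rw [Set.nonempty_iff_ne_empty]
      intro h
      rw [h] at hcompl
      exact hcompl (measure_empty)
    obtain ⟨x, hxc, hxB⟩ := hne
    rw [Set.mem_compl_iff, Set.mem_union, not_or] at hxc
    obtain ⟨hx1, hx2⟩ := hxc
    refine ⟨x, hxB, ?_, ?_⟩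
    · rw [hA2def, Set.mem_setOf_eq, not_le, ← enorm_eq_nnnorm, ← ofReal_norm] at hx2
      exact (ENNReal.ofReal_lt_ofReal_iff (by linarith)).mp hx2
    · rw [hA1def, Set.mem_setOf_eq, not_le, ← enorm_eq_nnnorm, ← ofReal_norm] at hx1
      exact (ENNReal.ofReal_lt_ofReal_iff (by norm_num)).mp hx1
  -- compactness contradiction
  choose x hxB hgx hux using key
  set z := fun n => g (x n) with hzdef
  have hKcomp : IsCompact (closure ((J : Y2 →ₗ[ℝ] Y1) '' Metric.closedBall 0 M)) := by
    exact IsCompactOperator.isCompact_closure_image_closedBall (𝕜₁ := ℝ) hJcomp M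
  have hmem : ∀ n, J (z n) ∈ closure ((J : Y2 →ₗ[ℝ] Y1) '' Metric.closedBall 0 M) := by
    intro n
    exact subset_closure ⟨z n, Metric.mem_closedBall.mpr (by
      rw [dist_zero_right]; exact (hgx n).le), rfl⟩
  obtain ⟨a, -, φ, hφ, hconv⟩ := hKcomp.tendsto_subseq hmem
  rw [Metric.tendsto_atTop] at hconv
  obtain ⟨Nk, hNk⟩ := hconv (1/4) (by norm_num)
  set m := φ Nk with hm
  set n := φ (Nk + 1) with hn
  have hmn : m ≠ n := hφ.injective.ne (by omega)
  have hdist : dist (J (z m)) (J (z n)) < 1/2 := by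
    calc dist (J (z m)) (J (z n)) ≤ dist (J (z m)) a + dist (J (z n)) a := dist_triangle_right _ _ _
      _ < 1/4 + 1/4 := add_lt_add (hNk Nk le_rfl) (hNk (Nk + 1) (by omega))
      _ = 1/2 := by norm_num
  have hym : ‖y m - J (z m)‖ < 1/4 := by
    have h := hux m
    rw [hu] at h
    rwa [uuAux_eq hd (hxB m)] at h
  have hyn : ‖y n - J (z n)‖ < 1/4 := by
    have h := hux n
    rw [hu] at h
    rwa [uuAux_eq hd (hxB n)] at h
  have hsep1 : (1 : ℝ) ≤ ‖y m - y n‖ := hysep hmn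
  have : ‖y m - y n‖ < 1 := by
    calc ‖y m - y n‖ = ‖(y m - J (z m)) + (J (z m) - J (z n)) + (J (z n) - y n)‖ := by
          congr 1; abel
      _ ≤ ‖y m - J (z m)‖ + ‖J (z m) - J (z n)‖ + ‖J (z n) - y n‖ := norm_add₃_le
      _ < 1/4 + 1/2 + 1/4 := by
          refine add_lt_add (add_lt_add hym ?_) ?_
          · rw [← dist_eq_norm]; exact hdist
          · rw [norm_sub_rev]; exact hyn
      _ = 1 := by norm_num
  linarith
end

section
/- Let $Y_1, Y_2$ be Banach spaces, and let $F : \mathbb{R}^d \times Y_1 \to Y_2$ satisfy: (i) there is $K > 0$ with $|F(x,y) - F(x,y')|_{Y_2} \le K|y - y'|_{Y_1}$ for all $x \in \mathbb{R}^d$, $y, y' \in Y_1$; (ii) for each fixed $y \in Y_1$, the map $x \mapsto F(x,y)$ belongs to $L^2_{\mathrm{ul-w}}(\mathbb{R}^d, Y_2)$. Then the Nemytskii operator $\tilde{F} : u \mapsto (x \mapsto F(x, u(x)))$ is a well-defined Lipschitz map from $L^2_{\mathrm{ul-w}}(\mathbb{R}^d, Y_1)$ to $L^2_{\mathrm{ul-w}}(\mathbb{R}^d,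 Y_2)$ with Lipschitz constant at most $K$ for the uniformly local norms. -/
open MeasureTheory ENNReal

open Filter in
/-- Measurability of the Nemytskii composition. -/
lemma nemytskii_aux_meas {d : ℕ} {Y1 Y2 : Type*}
    [NormedAddCommGroup Y1] [NormedAddCommGroup Y2]
    (F : EuclideanSpace ℝ (Fin d) → Y1 → Y2) (K : ℝ) (hK0 : 0 ≤ K)
    (hLip : ∀ x y y', ‖F x y - F x y'‖ ≤ K * ‖y - y'‖)
    (hmeas : ∀ y, AEStronglyMeasurable (fun x => F x y) volume)
    (u : EuclideanSpace ℝ (Fin d) → Y1) (hu : AEStronglyMeasurable u volume) :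
    AEStronglyMeasurable (fun x => F x (u x)) volume := by
  classical
  have hcont : ∀ x, Continuous (F x) := by
    intro x
    refine (LipschitzWith.of_dist_le_mul (K := K.toNNReal) fun y y' => ?_).continuous
    rw [dist_eq_norm, dist_eq_norm, Real.coe_toNNReal K hK0]
    exact hLip x y y'
  -- simple functions
  have hsimple : ∀ s : SimpleFunc (EuclideanSpace ℝ (Fin d)) Y1,
      AEStronglyMeasurable (fun x => F x (s x)) volume := by
    intro s
    induction s using SimpleFunc.induction with
    | @const c t ht =>
      have heq : (fun x => F x ((SimpleFunc.piecewise t ht (SimpleFunc.const _ c)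
          (SimpleFunc.const _ (0 : Y1))) x))
          = t.piecewise (fun x => F x c) (fun x => F x 0) := by
        funext x
        by_cases hx : x ∈ t <;> simp [SimpleFunc.piecewise_apply, Set.piecewise, hx]
      rw [heq]
      exact AEStronglyMeasurable.piecewise ht ((hmeas c).restrict) ((hmeas 0).restrict)
    | @add f g hdisj hf hg =>
      have heq : (fun x => F x ((f + g) x))
          = (Function.support f).piecewise (fun x => F x (f x)) (fun x => F x (g x)) := by
        funext x
        by_cases hx : x ∈ Function.support f
        · have hg0 : g x = 0 := by
            by_contra h
            exact (Set.disjoint_left.1 hdisj hx) h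
          simp [Set.piecewise, hx, hg0]
        · have hf0 : f x = 0 := by simpa [Function.mem_support, not_not] using hx
          simp [Set.piecewise, hx, hf0]
      rw [heq]
      exact AEStronglyMeasurable.piecewise f.measurableSet_support hf.restrict hg.restrict
  obtain ⟨w, hw, huw⟩ := hu
  have hwm : AEStronglyMeasurable (fun x => F x (w x)) volume := by
    refine aestronglyMeasurable_of_tendsto_ae atTop (fun n => hsimple (hw.approx n))
      (Filter.Eventually.of_forall fun x => ?_)
    exact ((hcont x).tendsto _).comp (hw.tendsto_approx x)
  exact hwm.congr (by filter_upwards [huw] with x hx; rw [hx])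

/-- The Lipschitz bound for the ul-norm. -/
lemma nemytskii_aux_bound {d : ℕ} {Y1 Y2 : Type*}
    [NormedAddCommGroup Y1] [NormedSpace ℝ Y1] [NormedAddCommGroup Y2] [NormedSpace ℝ Y2]
    (F : EuclideanSpace ℝ (Fin d) → Y1 → Y2) (K : ℝ) (hK : 0 ≤ K)
    (hLip : ∀ x y y', ‖F x y - F x y'‖ ≤ K * ‖y - y'‖)
    (u v : EuclideanSpace ℝ (Fin d) → Y1) :
    ulNorm 2 (fun x => F x (u x) - F x (v x)) ≤
      ENNReal.ofReal K * ulNorm 2 (fun x => u x - v x) := by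
  simp only [ulNorm]
  refine iSup_le fun a => ?_
  have h1 : eLpNorm (fun x => F x (u x) - F x (v x)) 2 (volume.restrict (Metric.ball a 1))
      ≤ eLpNorm (fun x => K • (u x - v x)) 2 (volume.restrict (Metric.ball a 1)) := by
    refine eLpNorm_mono fun x => ?_
    rw [norm_smul, Real.norm_of_nonneg hK]
    exact hLip x (u x) (v x)
  rw [show (fun x => K • (u x - v x)) = K • (fun x => u x - v x) from rfl,
    eLpNorm_const_smul] at h1
  refine h1.trans ?_
  have h2 : (‖K‖₊ : ℝ≥0∞) = ENNReal.ofReal K := by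
    rw [ENNReal.ofReal, Real.toNNReal_eq_nnnorm_of_nonneg hK]
  rw [show ‖K‖ₑ = ENNReal.ofReal K from h2]
  exact mul_le_mul_right (le_iSup (fun b : EuclideanSpace ℝ (Fin d) =>
    eLpNorm (fun x => u x - v x) 2 (volume.restrict (Metric.ball b 1))) a) _

lemma ulNorm_add_le {d : ℕ} {Y : Type*} [NormedAddCommGroup Y]
    (f g : EuclideanSpace ℝ (Fin d) → Y)
    (hf : AEStronglyMeasurable f volume) (hg : AEStronglyMeasurable g volume) :
    ulNorm 2 (fun x => f x + g x) ≤ ulNorm 2 f + ulNorm 2 g := by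
  simp only [ulNorm]
  refine iSup_le fun a => ?_
  refine (eLpNorm_add_le hf.restrict hg.restrict one_le_two).trans ?_
  exact add_le_add
    (le_iSup (fun b : EuclideanSpace ℝ (Fin d) =>
      eLpNorm f 2 (volume.restrict (Metric.ball b 1))) a)
    (le_iSup (fun b : EuclideanSpace ℝ (Fin d) =>
      eLpNorm g 2 (volume.restrict (Metric.ball b 1))) a)



/-- Let `F : ℝᵈ × Y₁ → Y₂` be uniformly Lipschitz in its second variable
with constant `K`, and suppose `x ↦ F(x,y)` belongs to `L²_{ul-w}(ℝᵈ, Y₂)` for each fixed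
`y`.  Then the Nemytskii operator `u ↦ (x ↦ F(x, u(x)))` is a well-defined map from
`L²_{ul-w}(ℝᵈ, Y₁)` to `L²_{ul-w}(ℝᵈ, Y₂)` (in particular it preserves strong
measurability), Lipschitz with constant at most `K` for the uniformly local norms. -/
theorem nemytskii_lipschitz_on_L2_ulw
    {d : ℕ} {Y1 Y2 : Type*}
    [NormedAddCommGroup Y1] [NormedSpace ℝ Y1]
    [NormedAddCommGroup Y2] [NormedSpace ℝ Y2]
    (F : EuclideanSpace ℝ (Fin d) → Y1 → Y2) (K : ℝ) (hK : 0 < K)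
    (hLip : ∀ x y y', ‖F x y - F x y'‖ ≤ K * ‖y - y'‖)
    (hmeas : ∀ y, AEStronglyMeasurable (fun x => F x y) volume)
    (hmem : ∀ y, ulNorm 2 (fun x => F x y) < ⊤) :
    (∀ u : EuclideanSpace ℝ (Fin d) → Y1,
      AEStronglyMeasurable u volume → ulNorm 2 u < ⊤ →
        AEStronglyMeasurable (fun x => F x (u x)) volume ∧
          ulNorm 2 (fun x => F x (u x)) < ⊤) ∧
    (∀ u v : EuclideanSpace ℝ (Fin d) → Y1,
      AEStronglyMeasurable u volume → ulNorm 2 u < ⊤ →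
      AEStronglyMeasurable v volume → ulNorm 2 v < ⊤ →
        ulNorm 2 (fun x => F x (u x) - F x (v x)) ≤
          ENNReal.ofReal K * ulNorm 2 (fun x => u x - v x)) := by
  constructor
  · intro u hu hufin
    have hm := nemytskii_aux_meas F K hK.le hLip hmeas u hu
    refine ⟨hm, ?_⟩
    have hsub : ulNorm 2 (fun x => F x (u x) - F x ((fun _ => (0 : Y1)) x)) ≤
        ENNReal.ofReal K * ulNorm 2 (fun x => u x - (fun _ => (0 : Y1)) x) :=
      nemytskii_aux_bound F K hK.le hLip u (fun _ => 0)
    simp only [sub_zero] at hsub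
    have hle : ulNorm 2 (fun x => F x (u x)) ≤
        ulNorm 2 (fun x => F x (u x) - F x 0) + ulNorm 2 (fun x => F x 0) := by
      have hdec : (fun x => F x (u x)) = (fun x => (F x (u x) - F x 0) + F x 0) := by
        funext x; abel
      rw [hdec]
      exact ulNorm_add_le _ _ (hm.sub (hmeas 0)) (hmeas 0)
    refine lt_of_le_of_lt hle (ENNReal.add_lt_top.2 ⟨?_, hmem 0⟩)
    exact lt_of_le_of_lt hsub (ENNReal.mul_lt_top ENNReal.ofReal_lt_top hufin)
  · intro u v _ _ _ _
    exact nemytskii_aux_bound F K hK.le hLip u v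
end

section
/- Let $A$ be a sectorial operator on a Banach space $X$, and let $K$ be a linear operator with $D(A) \subseteq D(K)$ such that for some $\epsilon \in (0,1)$ and $C > 0$, $\|Ku\| \le \epsilon\|Au\| + C\|u\|$ for all $u \in D(A)$. If $\epsilon$ is sufficiently small (depending only on the sectorial constants of $A$), then $A + K$ with domain $D(A)$ is a sectorial operator on $X$. -/
open Set

/-- `A` (a total linear map regarded as an unbounded operator with domain `D`) is a
sectorial operator on `X` with sector vertex `z₀`, angle `φ` and constant `M`: it is
densely defined and closed, and every `z` with `φ ≤ |arg (z - z₀)| (≤ π)` belongs to the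
resolvent set, with `‖(z - A)⁻¹‖ ≤ M / |z - z₀|`. -/
def IsSectorialWith {X : Type*} [NormedAddCommGroup X] [NormedSpace ℂ X]
    (A : X →ₗ[ℂ] X) (D : Set X) (z₀ φ M : ℝ) : Prop :=
  Dense D ∧ IsClosed {q : X × X | q.1 ∈ D ∧ A q.1 = q.2} ∧
    φ ∈ Set.Ioo (0 : ℝ) (Real.pi / 2) ∧ 0 < M ∧
    ∀ z : ℂ, z ≠ (z₀ : ℂ) → φ ≤ |(z - (z₀ : ℂ)).arg| →
      ∃ R : X →L[ℂ] X,
        (∀ x, R x ∈ D) ∧ (∀ x, z • R x - A (R x) = x) ∧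
        (∀ x ∈ D, R (z • x - A x) = x) ∧
        ‖R‖ ≤ M / ‖z - (z₀ : ℂ)‖

/-- `A` is sectorial with some constants. -/
def IsSectorial {X : Type*} [NormedAddCommGroup X] [NormedSpace ℂ X]
    (A : X →ₗ[ℂ] X) (D : Set X) : Prop :=
  ∃ z₀ φ M : ℝ, IsSectorialWith A D z₀ φ M

private lemma arg_ge_iff {φ : ℝ} (hφ : φ ∈ Set.Ioo (0:ℝ) (Real.pi/2)) {u : ℂ} (hu : u ≠ 0) :
    φ ≤ |u.arg| ↔ u.re ≤ Real.cos φ * ‖u‖ := by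
  have hu0 : 0 < ‖u‖ := by simpa using hu
  have hφπ : φ ≤ Real.pi := le_of_lt (lt_of_lt_of_le hφ.2 (by linarith [Real.pi_pos]))
  have hargπ : |u.arg| ≤ Real.pi := Complex.abs_arg_le_pi u
  have hcosarg : Real.cos |u.arg| = u.re / ‖u‖ := by
    rw [Real.cos_abs, Complex.cos_arg hu]
  constructor
  · intro h
    have h2 := Real.cos_le_cos_of_nonneg_of_le_pi (le_of_lt hφ.1) hargπ h
    rw [hcosarg] at h2
    have := mul_le_mul_of_nonneg_right h2 hu0.le
    calc u.re = (u.re / ‖u‖) * ‖u‖ := by field_simp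
    _ ≤ Real.cos φ * ‖u‖ := this
  · intro h
    by_contra hlt
    push_neg at hlt
    have h2 : Real.cos φ < Real.cos |u.arg| :=
      Real.cos_lt_cos_of_nonneg_of_le_pi (abs_nonneg _) hφπ hlt
    rw [hcosarg, lt_div_iff₀ hu0] at h2
    linarith

set_option maxHeartbeats 2000000 in
/-- Let `A` be a sectorial operator on a Banach space `X` with domain `D`
and sectorial constants `z₀, φ, M`, and let `K` be a linear operator (defined at least on
`D`) satisfying the relative bound `‖Ku‖ ≤ ε‖Au‖ + C‖u‖` on `D`.  If `ε ∈ (0,1)` is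
sufficiently small — with the smallness threshold depending only on the sectorial constants
of `A` — then `A + K`, with the same domain `D`, is sectorial. -/
theorem sectorial_of_relatively_bounded_perturbation
    {X : Type*} [NormedAddCommGroup X] [NormedSpace ℂ X] [CompleteSpace X]
    (A : X →ₗ[ℂ] X) (D : Set X) (z₀ φ M : ℝ)
    (hA : IsSectorialWith A D z₀ φ M) :
    ∃ ε₀ > (0 : ℝ), ∀ (ε C : ℝ), 0 < ε → ε < 1 → ε < ε₀ → 0 < C →
      ∀ K : X →ₗ[ℂ] X, (∀ u ∈ D, ‖K u‖ ≤ ε * ‖A u‖ + C * ‖u‖) →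
        IsSectorial (A + K) D := by
  obtain ⟨hD, hclosed, hφ, hM, hres⟩ := hA
  obtain ⟨s, hs⟩ : ∃ s, Real.sin φ = s := ⟨_, rfl⟩
  obtain ⟨c, hc⟩ : ∃ c, Real.cos φ = c := ⟨_, rfl⟩
  have hφ0 : 0 < φ := hφ.1
  have hφπ2 : φ < Real.pi / 2 := hφ.2
  have hπ : 0 < Real.pi := Real.pi_pos
  have hs0 : 0 < s := hs ▸ Real.sin_pos_of_pos_of_lt_pi hφ0 (by linarith)
  have hc0 : 0 < c := hc ▸ Real.cos_pos_of_mem_Ioo ⟨by linarith, hφπ2⟩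
  have hc1 : c ≤ 1 := hc ▸ Real.cos_le_one φ
  have hsc : s ^ 2 + c ^ 2 = 1 := by rw [← hs, ← hc]; exact Real.sin_sq_add_cos_sq φ
  refine ⟨1 / (4 * (M + 1)), one_div_pos.mpr (by linarith), ?_⟩
  intro ε C hε0 hε1 hεε₀ hC0 K hK
  obtain ⟨T, hTdef⟩ : ∃ T, 1 + 4 * M * (|z₀| + C) / s = T := ⟨_, rfl⟩
  have hMzC : (0:ℝ) ≤ 4 * M * (|z₀| + C) := by
    nlinarith [abs_nonneg z₀, mul_nonneg hM.le (abs_nonneg z₀), mul_nonneg hM.le hC0.le]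
  have hT0 : 0 < T := by
    rw [← hTdef]
    have := div_nonneg hMzC hs0.le
    linarith
  have hsT : 4 * (M * |z₀| + C * M) ≤ s * T := by
    have h1 : s * T = s + 4 * M * (|z₀| + C) := by
      rw [← hTdef]
      field_simp
    rw [h1]; nlinarith [abs_nonneg z₀]
  -- the key resolvent construction for the shifted sector
  have key : ∀ z : ℂ, z ≠ ((z₀ - T : ℝ) : ℂ) → φ ≤ |(z - ((z₀ - T : ℝ) : ℂ)).arg| →
      ∃ R' : X →L[ℂ] X, (∀ x, R' x ∈ D) ∧ (∀ x, z • R' x - (A + K) (R' x) = x) ∧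
        (∀ u ∈ D, R' (z • u - (A + K) u) = u) ∧
        ‖R'‖ ≤ (2 * M / s) / ‖z - ((z₀ - T : ℝ) : ℂ)‖ := by
    intro z hz1 harg
    obtain ⟨w, hwdef⟩ : ∃ w, z - ((z₀ - T : ℝ) : ℂ) = w := ⟨_, rfl⟩
    rw [hwdef] at harg
    have hw0 : w ≠ 0 := hwdef ▸ sub_ne_zero.mpr hz1
    obtain ⟨wa, hwa⟩ : ∃ wa, ‖w‖ = wa := ⟨_, rfl⟩
    have hwa0 : 0 < wa := by rw [← hwa]; exact norm_pos_iff.mpr hw0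
    have hwre : w.re ≤ c * wa := by
      rw [← hc, ← hwa]; exact (arg_ge_iff hφ hw0).mp harg
    obtain ⟨v, hvdef⟩ : ∃ v, z - (z₀ : ℂ) = v := ⟨_, rfl⟩
    have hv : v = w - (T : ℂ) := by rw [← hvdef, ← hwdef]; push_cast; ring
    obtain ⟨va, hva⟩ : ∃ va, ‖v‖ = va := ⟨_, rfl⟩
    have hva2 : va ^ 2 = wa ^ 2 - 2 * T * w.re + T ^ 2 := by
      rw [← hva, ← hwa, hv, Complex.sq_norm, Complex.sq_norm, Complex.normSq_apply,
        Complex.normSq_apply]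
      simp only [Complex.sub_re, Complex.sub_im, Complex.ofReal_re, Complex.ofReal_im]
      ring
    have hva_nonneg : 0 ≤ va := hva ▸ norm_nonneg v
    have hwa_nonneg : 0 ≤ wa := hwa0.le
    have hge1 : s * T ≤ va := by
      nlinarith [sq_nonneg (wa - c * T), sq_nonneg (va - s * T), hsc, sq_nonneg T,
        mul_le_mul_of_nonneg_left hwre hT0.le, mul_pos hs0 hT0]
    have hge2 : s * wa ≤ va := by
      nlinarith [sq_nonneg (T - c * wa), sq_nonneg (va - s * wa), hsc, sq_nonneg wa,
        mul_le_mul_of_nonneg_left hwre hT0.le, mul_pos hs0 hwa0]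
    have hva0 : 0 < va := lt_of_lt_of_le (mul_pos hs0 hT0) hge1
    have hv0 : v ≠ 0 := by
      intro h
      have h2 := hva0
      rw [← hva, h] at h2
      simp at h2
    have hztri : wa ≤ va + T := by
      have h1 : w = v + (T : ℂ) := by rw [hv]; ring
      have h2 := norm_add_le v ((T : ℝ) : ℂ)
      rw [hva, Complex.norm_real, Real.norm_eq_abs, abs_of_pos hT0] at h2
      rw [← hwa, h1]
      exact h2
    have hvre : v.re ≤ c * va := by
      have h1 : v.re = w.re - T := by rw [hv]; simp
      have h2 : c * wa ≤ c * (va + T) := mul_le_mul_of_nonneg_left hztri hc0.le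
      nlinarith [mul_le_of_le_one_left hT0.le hc1]
    -- apply sectoriality of A at z
    have hzz0 : z ≠ (z₀ : ℂ) := by
      intro h; apply hv0; rw [← hvdef, h, sub_self]
    have hargv : φ ≤ |(z - (z₀ : ℂ)).arg| := by
      rw [hvdef]
      refine (arg_ge_iff hφ hv0).mpr ?_
      rw [hc, hva]
      exact hvre
    obtain ⟨R, hRD, hR1, hR2, hRn⟩ := hres z hzz0 hargv
    have hRn' : ‖R‖ ≤ M / va := by rw [← hva, ← hvdef]; exact hRn
    have hAR : ∀ y, A (R y) = z • R y - y := by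
      intro y
      rw [eq_sub_iff_add_eq, add_comm]
      exact (sub_eq_iff_eq_add.mp (hR1 y)).symm
    have hzabs : ‖z‖ ≤ va + |z₀| := by
      have h1 : z = v + ((z₀ : ℝ) : ℂ) := by rw [← hvdef]; ring
      have h2 := norm_add_le v ((z₀ : ℝ) : ℂ)
      rw [hva, Complex.norm_real, Real.norm_eq_abs] at h2
      rw [h1]
      exact h2
    obtain ⟨β, hβ⟩ : ∃ β, ε * (‖z‖ * (M / va) + 1) + C * (M / va) = β := ⟨_, rfl⟩
    have hMva : 0 ≤ M / va := (div_pos hM hva0).le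
    have hβ0 : 0 ≤ β := by
      rw [← hβ]
      have h2 : 0 ≤ ‖z‖ := norm_nonneg z
      have h3 : (0:ℝ) ≤ ‖z‖ * (M / va) + 1 := by nlinarith
      nlinarith [mul_nonneg hε0.le h3, mul_nonneg hC0.le hMva]
    have hRx : ∀ x : X, ‖R x‖ ≤ (M / va) * ‖x‖ := by
      intro x
      calc ‖R x‖ ≤ ‖R‖ * ‖x‖ := R.le_opNorm x
      _ ≤ (M / va) * ‖x‖ := mul_le_mul_of_nonneg_right hRn' (norm_nonneg x)
    have hKR : ∀ x : X, ‖K (R x)‖ ≤ β * ‖x‖ := by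
      intro x
      have h1 := hK (R x) (hRD x)
      have h2 : ‖A (R x)‖ ≤ ‖z‖ * ((M / va) * ‖x‖) + ‖x‖ := by
        rw [hAR x]
        calc ‖z • R x - x‖ ≤ ‖z • R x‖ + ‖x‖ := norm_sub_le _ _
        _ = ‖z‖ * ‖R x‖ + ‖x‖ := by rw [norm_smul]
        _ ≤ ‖z‖ * ((M / va) * ‖x‖) + ‖x‖ := by
            exact add_le_add (mul_le_mul_of_nonneg_left (hRx x) (norm_nonneg z)) le_rfl
      have h4 := mul_le_mul_of_nonneg_left h2 hε0.le
      have h5 := mul_le_mul_of_nonneg_left (hRx x) hC0.le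
      calc ‖K (R x)‖ ≤ ε * ‖A (R x)‖ + C * ‖R x‖ := h1
      _ ≤ ε * (‖z‖ * ((M / va) * ‖x‖) + ‖x‖) + C * ((M / va) * ‖x‖) := by
          linarith
      _ = (ε * (‖z‖ * (M / va) + 1) + C * (M / va)) * ‖x‖ := by ring
      _ = β * ‖x‖ := by rw [hβ]
    obtain ⟨B, hBdef⟩ : ∃ B : X →L[ℂ] X, (K ∘ₗ (R : X →ₗ[ℂ] X)).mkContinuous β hKR = B :=
      ⟨_, rfl⟩
    have hBapp : ∀ y, B y = K (R y) := by
      intro y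
      rw [← hBdef, LinearMap.mkContinuous_apply]
      rfl
    have hBn : ‖B‖ ≤ β := hBdef ▸ LinearMap.mkContinuous_norm_le _ hβ0 _
    -- β ≤ 1/2
    have hεM : ε * (M + 1) ≤ 1 / 4 := by
      have h4 : 0 < 4 * (M + 1) := by linarith
      rw [lt_div_iff₀ h4] at hεε₀
      nlinarith
    have hεz : ε * (M * |z₀|) ≤ M * |z₀| :=
      mul_le_of_le_one_left (mul_nonneg hM.le (abs_nonneg z₀)) hε1.le
    have hβva : β * va ≤ va / 2 := by
      have hexp : β * va = ε * (‖z‖ * M + va) + C * M := by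
        rw [← hβ]
        field_simp
      have h1 : ε * (‖z‖ * M) ≤ ε * ((va + |z₀|) * M) :=
        mul_le_mul_of_nonneg_left (mul_le_mul_of_nonneg_right hzabs hM.le) hε0.le
      nlinarith [mul_le_mul_of_nonneg_right hεM hva_nonneg, hsT, hge1, abs_nonneg z₀]
    have hβ12 : β ≤ 1 / 2 := by
      rw [← mul_le_mul_iff_of_pos_right hva0]
      calc β * va ≤ va / 2 := hβva
      _ = 1 / 2 * va := by ring
    have hBhalf : ‖B‖ ≤ 1 / 2 := hBn.trans hβ12
    have hBlt : ‖B‖ < 1 := lt_of_le_of_lt hBhalf (by norm_num)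
    obtain ⟨V, hVdef⟩ : ∃ V : X →L[ℂ] X, (↑(Units.oneSub B hBlt)⁻¹ : X →L[ℂ] X) = V := ⟨_, rfl⟩
    have hUV : (1 - B) * V = 1 := by rw [← hVdef]; exact (Units.oneSub B hBlt).mul_inv
    have hVU : V * (1 - B) = 1 := by rw [← hVdef]; exact (Units.oneSub B hBlt).inv_mul
    have hVn : ‖V‖ ≤ 2 := by
      have h : V - B * V = 1 := by
        calc V - B * V = (1 - B) * V := by rw [sub_mul, one_mul]
        _ = 1 := hUV
      have h1 : V = 1 + B * V := sub_eq_iff_eq_add.mp h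
      have h2 : ‖V‖ ≤ 1 + ‖B‖ * ‖V‖ := by
        conv_lhs => rw [h1]
        calc ‖1 + B * V‖ ≤ ‖(1 : X →L[ℂ] X)‖ + ‖B * V‖ := norm_add_le _ _
        _ ≤ 1 + ‖B‖ * ‖V‖ := add_le_add ContinuousLinearMap.norm_id_le (norm_mul_le B V)
      nlinarith [norm_nonneg V, norm_nonneg B,
        mul_le_mul_of_nonneg_right hBhalf (norm_nonneg V)]
    refine ⟨R * V, ?_, ?_, ?_, ?_⟩
    · intro x
      rw [ContinuousLinearMap.mul_apply]
      exact hRD _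
    · intro x
      rw [ContinuousLinearMap.mul_apply, LinearMap.add_apply, hAR]
      have hx : V x - B (V x) = x := by
        have h := DFunLike.congr_fun hUV x
        simpa [ContinuousLinearMap.mul_apply, ContinuousLinearMap.sub_apply,
          ContinuousLinearMap.one_apply] using h
      rw [hBapp] at hx
      have h4 : z • R (V x) - (z • R (V x) - V x + K (R (V x))) = V x - K (R (V x)) := by
        abel
      exact h4.trans hx
    · intro u hu
      have h1 : (1 - B) (z • u - A u) = z • u - (A + K) u := by
        rw [ContinuousLinearMap.sub_apply, ContinuousLinearMap.one_apply, hBapp,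
          hR2 u hu, LinearMap.add_apply, sub_sub]
      have h2 : V (z • u - (A + K) u) = z • u - A u := by
        rw [← h1]
        have h := DFunLike.congr_fun hVU (z • u - A u)
        simpa [ContinuousLinearMap.mul_apply, ContinuousLinearMap.one_apply] using h
      rw [ContinuousLinearMap.mul_apply, h2, hR2 u hu]
    · have h1 : ‖R * V‖ ≤ (M / va) * 2 := by
        calc ‖R * V‖ ≤ ‖R‖ * ‖V‖ := norm_mul_le _ _
        _ ≤ (M / va) * 2 := mul_le_mul hRn' hVn (norm_nonneg V) hMva
      refine h1.trans ?_
      rw [hwdef, hwa, div_mul_eq_mul_div, div_le_div_iff₀ hva0 hwa0, div_mul_eq_mul_div,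
        le_div_iff₀ hs0]
      nlinarith [mul_le_mul_of_nonneg_left hge2 (by linarith : (0:ℝ) ≤ 2 * M)]
  refine ⟨z₀ - T, φ, 2 * M / s, hD, ?_, hφ, div_pos (by linarith) hs0, key⟩
  -- closedness of the graph of A + K, using the resolvent at one point
  have hz1 : ((z₀ - T : ℝ) : ℂ) - 1 ≠ ((z₀ - T : ℝ) : ℂ) := by
    intro h
    have h2 : (1 : ℂ) = 0 := by linear_combination -h
    simp at h2
  have harg1 : φ ≤ |((((z₀ - T : ℝ) : ℂ) - 1) - ((z₀ - T : ℝ) : ℂ)).arg| := by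
    have h1 : (((z₀ - T : ℝ) : ℂ) - 1) - ((z₀ - T : ℝ) : ℂ) = -1 := by ring
    rw [h1, Complex.arg_neg_one, abs_of_pos hπ]
    linarith
  obtain ⟨R', hR'D, hR'1, hR'2, _⟩ := key (((z₀ - T : ℝ) : ℂ) - 1) hz1 harg1
  obtain ⟨zc, hzc⟩ : ∃ zc, ((z₀ - T : ℝ) : ℂ) - 1 = zc := ⟨_, rfl⟩
  rw [hzc] at hR'1 hR'2
  have hset : {q : X × X | q.1 ∈ D ∧ (A + K) q.1 = q.2} =
      (fun q : X × X => R' (zc • q.1 - q.2) - q.1) ⁻¹' {0} := by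
    ext ⟨u, x⟩
    simp only [Set.mem_setOf_eq, Set.mem_preimage, Set.mem_singleton_iff, sub_eq_zero]
    constructor
    · rintro ⟨hu, hx⟩
      rw [← hx]
      exact hR'2 u hu
    · intro h
      have hu : u ∈ D := by rw [← h]; exact hR'D _
      have h2 := hR'1 (zc • u - x)
      rw [h] at h2
      exact ⟨hu, sub_right_inj.mp h2⟩
  rw [hset]
  apply IsClosed.preimage ?_ isClosed_singleton
  apply Continuous.sub
  · exact R'.continuous.comp ((continuous_const.smul continuous_fst).sub continuous_snd)
  · exact continuous_fst
end
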